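/- arXiv:2209.07128 — 5 statements merged into one kernel-verified Lean document; each statement's English description precedes it below -/
import Mathlib

section
/- For every integer n ≥ 1 and every real z > 0, the ladder-operator coefficient B_n(z) := (1/h_{n−1}(t)) ∫₀^∞ [(v'(z) − v'(y))/(z − y)] P_n(y;t) P_{n−1}(y;t) w(y;t) dy, where v(z) = z² + t/z − λ ln z is the potential of the weight, satisfies B_n(z) = (2β_n(t) − n)/z + r_n(t)/z². -/
open MeasureTheory Real Filter
open Topology

/-- The singularly perturbed Laguerre-type weight `w(x;t) = x^λ e^{-x² - t/x}` on `(0,∞)`. -/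
noncomputable def weight (lam t x : ℝ) : ℝ := x ^ lam * Real.exp (-x ^ 2 - t / x)

/-- The system of monic orthogonal polynomials with respect to the weight
`w(x;t) = x^λ e^{-x² - t/x}` on `(0,∞)` (for every `t > 0`), together with the
normalization constants `h n t` and the recurrence coefficients `α n t`, `β n t`
of the three-term recurrence `x Pₙ = Pₙ₊₁ + αₙ Pₙ + βₙ Pₙ₋₁`, `P₀ = 1`, `β₀ P₋₁ = 0`. -/
structure SingLaguerreOPS (lam : ℝ) : Type where
  P : ℕ → ℝ → Polynomial ℝ
  h : ℕ → ℝ → ℝ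
  α : ℕ → ℝ → ℝ
  β : ℕ → ℝ → ℝ
  /-- all moments `∫₀^∞ x^k w(x;t) dx`, `k ∈ ℤ`, converge -/
  moments : ∀ (k : ℤ) (t : ℝ), 0 < t →
    IntegrableOn (fun x : ℝ => x ^ k * weight lam t x) (Set.Ioi (0:ℝ))
  monic : ∀ n t, 0 < t → (P n t).Monic
  natDegree_eq : ∀ n t, 0 < t → (P n t).natDegree = n
  h_pos : ∀ n t, 0 < t → 0 < h n t
  orth : ∀ m n t, 0 < t →
    ∫ x in Set.Ioi (0:ℝ), (P m t).eval x * (P n t).eval x * weight lam t x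
      = if m = n then h n t else 0
  P_zero : ∀ t, 0 < t → P 0 t = 1
  recur : ∀ n t, 0 < t →
    Polynomial.X * P n t
      = P (n+1) t + Polynomial.C (α n t) * P n t
        + Polynomial.C (β n t) * (if n = 0 then 0 else P (n-1) t)

/-- The auxiliary quantity `Rₙ(t) = (t/hₙ) ∫₀^∞ y⁻¹ Pₙ(y)² w(y;t) dy`. -/
noncomputable def Rn (lam : ℝ) (S : SingLaguerreOPS lam) (n : ℕ) (t : ℝ) : ℝ :=
  t / S.h n t * ∫ y in Set.Ioi (0:ℝ), ((S.P n t).eval y) ^ 2 * weight lam t y / y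

/-- The auxiliary quantity `rₙ(t) = (t/hₙ₋₁) ∫₀^∞ y⁻¹ Pₙ(y) Pₙ₋₁(y) w(y;t) dy`
(with the convention `P₋₁ = 0`, so `r₀ = 0`). -/
noncomputable def rn (lam : ℝ) (S : SingLaguerreOPS lam) (n : ℕ) (t : ℝ) : ℝ :=
  t / S.h (n-1) t *
    ∫ y in Set.Ioi (0:ℝ),
      (S.P n t).eval y * (if n = 0 then 0 else (S.P (n-1) t).eval y) * weight lam t y / y

/-- The derivative `v'(z) = 2z - λ/z - t/z²` of the potential `v(z) = z² + t/z - λ ln z`. -/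
noncomputable def vprime (lam t z : ℝ) : ℝ := 2 * z - lam / z - t / z ^ 2

section Aux
variable {lam t : ℝ}

lemma intA (hmom : ∀ (k : ℤ), IntegrableOn (fun x : ℝ => x ^ k * weight lam t x) (Set.Ioi (0:ℝ)))
    (k : ℤ) (Q : Polynomial ℝ) :
    IntegrableOn (fun x : ℝ => Q.eval x * (x ^ k * weight lam t x)) (Set.Ioi (0:ℝ)) := by
  induction Q using Polynomial.induction_on' with
  | add p q hp hq =>
      refine IntegrableOn.congr_fun (hp.add hq) (fun x _ => ?_) measurableSet_Ioi
      simp [Polynomial.eval_add]; ring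
  | monomial i a =>
      have h0 := (hmom ((i : ℤ) + k)).const_mul a
      refine IntegrableOn.congr_fun h0 (fun x hx => ?_) measurableSet_Ioi
      have hx0 : (x:ℝ) ≠ 0 := ne_of_gt hx
      have hxe : (x:ℝ) ^ ((i:ℤ) + k) = x ^ (i:ℕ) * x ^ k := by
        rw [zpow_add₀ hx0, zpow_natCast]
      rw [hxe, Polynomial.eval_monomial]; ring

lemma intA0 (hmom : ∀ (k : ℤ), IntegrableOn (fun x : ℝ => x ^ k * weight lam t x) (Set.Ioi (0:ℝ)))
    (Q : Polynomial ℝ) :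
    IntegrableOn (fun x : ℝ => Q.eval x * weight lam t x) (Set.Ioi (0:ℝ)) := by
  have := intA hmom 0 Q
  simpa using this

/-- `J A = ∫₀^∞ A(x) w(x) dx`. -/
noncomputable def Jw (lam t : ℝ) (A : Polynomial ℝ) : ℝ :=
  ∫ x in Set.Ioi (0:ℝ), A.eval x * weight lam t x

lemma Jw_add (S : SingLaguerreOPS lam) (ht : 0 < t) (A B : Polynomial ℝ) : Jw lam t (A + B) = Jw lam t A + Jw lam t B := by
  unfold Jw
  rw [← integral_add (intA0 (fun k => S.moments k t ht) A) (intA0 (fun k => S.moments k t ht) B)]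
  apply setIntegral_congr_fun measurableSet_Ioi
  intro x _
  simp [Polynomial.eval_add]; ring

lemma Jw_Cmul (a : ℝ) (A : Polynomial ℝ) : Jw lam t (Polynomial.C a * A) = a * Jw lam t A := by
  unfold Jw
  rw [← integral_const_mul]
  apply setIntegral_congr_fun measurableSet_Ioi
  intro x _
  simp [Polynomial.eval_mul]; ring

lemma Jw_orth (S : SingLaguerreOPS lam) (ht : 0 < t) (m k : ℕ) : Jw lam t (S.P m t * S.P k t) = if m = k then S.h k t else 0 := by
  rw [← S.orth m k t ht]
  apply setIntegral_congr_fun measurableSet_Ioi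
  intro x _
  simp [Polynomial.eval_mul]

lemma Jw_zero : Jw lam t 0 = 0 := by simp [Jw]

/-- orthogonality of `P n` to all polynomials of degree `< n`. -/
lemma Jw_orth_lower (S : SingLaguerreOPS lam) (ht : 0 < t) (n : ℕ) (Q : Polynomial ℝ) (hQ : Q.degree < (n : ℕ)) :
    Jw lam t (Q * S.P n t) = 0 := by
  suffices H : ∀ d (Q : Polynomial ℝ), Q.natDegree = d → Q.degree < (n : ℕ) →
      Jw lam t (Q * S.P n t) = 0 from H Q.natDegree Q rfl hQ
  intro d
  induction d using Nat.strong_induction_on with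
  | _ d ih =>
    intro Q hd hQ
    by_cases hQ0 : Q = 0
    · simp [hQ0, Jw_zero]
    have hQdeg : Q.degree = (d : WithBot ℕ) := by
      rw [Polynomial.degree_eq_natDegree hQ0, hd]
    have hdn : d < n := by
      rw [← hd]; exact (Polynomial.natDegree_lt_iff_degree_lt hQ0).mpr hQ
    have hmonic := S.monic d t ht
    have hPdeg : (S.P d t).degree = (d : WithBot ℕ) := by
      rw [Polynomial.degree_eq_natDegree hmonic.ne_zero, S.natDegree_eq d t ht]
    set c := Q.leadingCoeff with hc
    have hc0 : c ≠ 0 := Polynomial.leadingCoeff_ne_zero.mpr hQ0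
    set R := Q - Polynomial.C c * S.P d t with hRdef
    have hsplit : Q = R + Polynomial.C c * S.P d t := by ring
    have hdegC : (Polynomial.C c * S.P d t).degree = Q.degree := by
      rw [Polynomial.degree_C_mul hc0, hPdeg, hQdeg]
    have hlcC : (Polynomial.C c * S.P d t).leadingCoeff = c := by
      simp [Polynomial.leadingCoeff_mul, hmonic.leadingCoeff]
    have hJR : Jw lam t (R * S.P n t) = 0 := by
      by_cases hR0 : R = 0
      · simp [hR0, Jw_zero]
      have hRlt : R.degree < Q.degree :=
        Polynomial.degree_sub_lt hdegC.symm hQ0 hlcC.symm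
      have hRn : R.degree < (n : ℕ) := lt_trans hRlt hQ
      have hRd : R.natDegree < d := by
        have : R.degree < (d : ℕ) := by rwa [hQdeg] at hRlt
        exact (Polynomial.natDegree_lt_iff_degree_lt hR0).mpr this
      exact ih R.natDegree hRd R rfl hRn
    calc Jw lam t (Q * S.P n t)
        = Jw lam t (R * S.P n t) + Jw lam t (Polynomial.C c * (S.P d t * S.P n t)) := by
          rw [← Jw_add S ht]; congr 1; rw [hsplit]; ring
      _ = 0 := by
          rw [hJR, Jw_Cmul, Jw_orth S ht d n, if_neg (Nat.ne_of_lt hdn)]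
          simp


lemma Jw_X (S : SingLaguerreOPS lam) (ht : 0 < t) (n : ℕ) (hn : 1 ≤ n) :
    Jw lam t ((Polynomial.X * S.P n t) * S.P (n-1) t) = S.β n t * S.h (n-1) t := by
  have hne : n ≠ 0 := Nat.one_le_iff_ne_zero.mp hn
  have hrec := S.recur n t ht
  rw [if_neg hne] at hrec
  rw [hrec]
  have expand : (S.P (n+1) t + Polynomial.C (S.α n t) * S.P n t
        + Polynomial.C (S.β n t) * S.P (n-1) t) * S.P (n-1) t
      = (S.P (n+1) t * S.P (n-1) t + Polynomial.C (S.α n t) * (S.P n t * S.P (n-1) t))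
        + Polynomial.C (S.β n t) * (S.P (n-1) t * S.P (n-1) t) := by ring
  rw [expand, Jw_add S ht, Jw_add S ht, Jw_Cmul, Jw_Cmul,
    Jw_orth S ht, Jw_orth S ht, Jw_orth S ht]
  have h1 : n + 1 ≠ n - 1 := by omega
  have h2 : n ≠ n - 1 := by omega
  rw [if_neg h1, if_neg h2, if_pos rfl]
  ring

lemma Jw_deriv1 (S : SingLaguerreOPS lam) (ht : 0 < t) (n : ℕ) (hn : 1 ≤ n) :
    Jw lam t ((S.P n t).derivative * S.P (n-1) t) = n * S.h (n-1) t := by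
  set D := (S.P n t).derivative with hD
  set E := D - Polynomial.C (n : ℝ) * S.P (n-1) t with hE
  have hsplit : D = E + Polynomial.C (n : ℝ) * S.P (n-1) t := by ring
  have hDdeg : D.natDegree ≤ n - 1 := by
    have := Polynomial.natDegree_derivative_le (S.P n t)
    rwa [S.natDegree_eq n t ht] at this
  have hPdeg : (S.P (n-1) t).natDegree = n - 1 := S.natDegree_eq (n-1) t ht
  have hEdeg : E.degree < ((n-1 : ℕ) : WithBot ℕ) := by
    rw [Polynomial.degree_lt_iff_coeff_zero]
    intro m hm
    rw [hE, Polynomial.coeff_sub, Polynomial.coeff_C_mul]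
    rcases eq_or_lt_of_le hm with hm' | hm'
    · have hm'' : m = n - 1 := by exact_mod_cast hm'.symm
      subst hm''
      rw [hD, Polynomial.coeff_derivative]
      have hidx : n - 1 + 1 = n := by omega
      rw [hidx]
      have hcPn : (S.P n t).coeff n = 1 := by
        have := (S.monic n t ht).coeff_natDegree
        rwa [S.natDegree_eq n t ht] at this
      have hcPn1 : (S.P (n-1) t).coeff (n-1) = 1 := by
        have := (S.monic (n-1) t ht).coeff_natDegree
        rwa [hPdeg] at this
      rw [hcPn, hcPn1, Nat.cast_sub hn]
      push_cast
      ring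
    · have hmn : (n - 1 : ℕ) < m := by exact_mod_cast hm'
      rw [Polynomial.coeff_eq_zero_of_natDegree_lt (lt_of_le_of_lt hDdeg hmn),
        Polynomial.coeff_eq_zero_of_natDegree_lt (by rw [hPdeg]; exact hmn)]
      ring
  calc Jw lam t (D * S.P (n-1) t)
      = Jw lam t (E * S.P (n-1) t)
        + (n : ℝ) * Jw lam t (S.P (n-1) t * S.P (n-1) t) := by
        rw [← Jw_Cmul, ← Jw_add S ht]; congr 1; rw [hsplit]; ring
    _ = n * S.h (n-1) t := by
        rw [Jw_orth_lower S ht (n-1) E hEdeg, Jw_orth S ht, if_pos rfl]; ring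

lemma Jw_deriv2 (S : SingLaguerreOPS lam) (ht : 0 < t) (n : ℕ) (hn : 1 ≤ n) :
    Jw lam t (S.P n t * (S.P (n-1) t).derivative) = 0 := by
  have hdeg : ((S.P (n-1) t).derivative).degree < (n : ℕ) := by
    refine lt_of_le_of_lt Polynomial.degree_le_natDegree ?_
    have h1 := Polynomial.natDegree_derivative_le (S.P (n-1) t)
    rw [S.natDegree_eq (n-1) t ht] at h1
    exact_mod_cast lt_of_le_of_lt h1 (by omega : n - 1 - 1 < n)
  rw [mul_comm]
  exact Jw_orth_lower S ht n _ hdeg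


lemma hasDerivAt_weight (ht : 0 < t) {x : ℝ} (hx : 0 < x) :
    HasDerivAt (fun y => weight lam t y)
      ((lam / x - 2 * x + t / x ^ 2) * weight lam t x) x := by
  have h1 : HasDerivAt (fun y : ℝ => y ^ lam) (lam * x ^ (lam - 1)) x :=
    Real.hasDerivAt_rpow_const (Or.inl hx.ne')
  have ha : HasDerivAt (fun y : ℝ => -y ^ 2) (-(2 * x)) x := by
    simpa using (hasDerivAt_pow 2 x).fun_neg
  have hb : HasDerivAt (fun y : ℝ => t / y) (-(t / x ^ 2)) x := by
    have := (hasDerivAt_inv hx.ne').const_mul t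
    simpa [div_eq_mul_inv, mul_comm, mul_left_comm] using this
  have h2 : HasDerivAt (fun y : ℝ => -y ^ 2 - t / y) (-(2 * x) + t / x ^ 2) x := by
    simpa [sub_eq_add_neg] using ha.fun_sub hb
  have h3 : HasDerivAt (fun y : ℝ => Real.exp (-y ^ 2 - t / y))
      (Real.exp (-x ^ 2 - t / x) * (-(2 * x) + t / x ^ 2)) x := by
    simpa [mul_comm] using h2.exp
  have h4 := h1.fun_mul h3
  have hrw : x ^ (lam - 1) = x ^ lam / x := by
    rw [Real.rpow_sub hx, Real.rpow_one]
  unfold weight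
  refine h4.congr_deriv ?_
  rw [hrw]
  field_simp
  ring

lemma tendsto_weight_atTop (ht : 0 < t) (A : Polynomial ℝ) :
    Tendsto (fun x => A.eval x * weight lam t x) atTop (𝓝 0) := by
  induction A using Polynomial.induction_on' with
  | add p q hp hq =>
      have := hp.add hq
      simp only [Polynomial.eval_add, add_mul] at *
      simpa using this
  | monomial i a =>
      have hbase := (tendsto_rpow_mul_exp_neg_mul_atTop_nhds_zero ((i : ℝ) + lam) 1
        one_pos).const_mul |a|
      rw [mul_zero] at hbase
      apply squeeze_zero_norm' _ hbase
      filter_upwards [eventually_ge_atTop (1 : ℝ)] with x hx1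
      have hx0 : (0:ℝ) < x := lt_of_lt_of_le one_pos hx1
      have hexp : Real.exp (-x ^ 2 - t / x) ≤ Real.exp (-1 * x) := by
        apply Real.exp_le_exp.mpr
        have h1 : x ≤ x ^ 2 := by nlinarith
        have h2 : 0 ≤ t / x := le_of_lt (div_pos ht hx0)
        nlinarith
      have hpow : x ^ (i : ℕ) * x ^ lam = x ^ ((i : ℝ) + lam) := by
        rw [Real.rpow_add hx0, Real.rpow_natCast]
      have hnn : 0 ≤ x ^ ((i:ℝ) + lam) := Real.rpow_nonneg hx0.le _
      calc ‖(Polynomial.monomial i a).eval x * weight lam t x‖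
          = |a| * (x ^ (i:ℕ) * x ^ lam) * Real.exp (-x ^ 2 - t / x) := by
            rw [Polynomial.eval_monomial]
            unfold weight
            rw [Real.norm_eq_abs, abs_mul, abs_mul, abs_mul, abs_of_nonneg (pow_nonneg hx0.le _),
              abs_of_nonneg (Real.rpow_nonneg hx0.le _), abs_of_nonneg (Real.exp_pos _).le]
            ring
        _ ≤ |a| * x ^ ((i:ℝ) + lam) * Real.exp (-1 * x) := by
            rw [hpow]
            have := mul_le_mul_of_nonneg_left hexp (mul_nonneg (abs_nonneg a) hnn)
            linarith
        _ = |a| * (x ^ ((i:ℝ) + lam) * Real.exp (-1 * x)) := by ring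

lemma tendsto_weight_zero (hlam : 0 ≤ lam) (ht : 0 < t) (A : Polynomial ℝ) :
    Tendsto (fun x => A.eval x * weight lam t x) (nhdsWithin 0 (Set.Ioi 0)) (𝓝 0) := by
  have h1 : Tendsto (fun x : ℝ => A.eval x) (nhdsWithin 0 (Set.Ioi 0)) (𝓝 (A.eval 0)) :=
    (A.continuousAt).tendsto.mono_left nhdsWithin_le_nhds
  have h2 : Tendsto (fun x : ℝ => x ^ lam) (nhdsWithin 0 (Set.Ioi 0)) (𝓝 ((0:ℝ) ^ lam)) :=
    (Real.continuousAt_rpow_const 0 lam (Or.inr hlam)).tendsto.mono_left nhdsWithin_le_nhds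
  have h3 : Tendsto (fun x : ℝ => -x ^ 2 - t / x) (nhdsWithin 0 (Set.Ioi 0)) atBot := by
    have ha : Tendsto (fun x : ℝ => -x ^ 2) (nhdsWithin 0 (Set.Ioi 0)) (𝓝 0) := by
      have : Tendsto (fun x : ℝ => -x ^ 2) (𝓝 0) (𝓝 (-(0:ℝ) ^ 2)) :=
        (continuous_pow 2).neg.tendsto 0
      simpa using this.mono_left nhdsWithin_le_nhds
    have hb : Tendsto (fun x : ℝ => t / x) (nhdsWithin 0 (Set.Ioi 0)) atTop := by
      have := tendsto_inv_nhdsGT_zero (𝕜 := ℝ)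
      have h := Tendsto.const_mul_atTop ht this
      simpa [div_eq_mul_inv] using h
    have hc : Tendsto (fun x : ℝ => -(t / x)) (nhdsWithin 0 (Set.Ioi 0)) atBot :=
      tendsto_neg_atBot_iff.mpr hb
    have := ha.add_atBot hc
    simpa [sub_eq_add_neg] using this
  have h4 : Tendsto (fun x : ℝ => Real.exp (-x ^ 2 - t / x)) (nhdsWithin 0 (Set.Ioi 0)) (𝓝 0) :=
    Real.tendsto_exp_atBot.comp h3
  have := (h1.mul h2).mul h4
  rw [mul_zero] at this
  unfold weight
  simpa [mul_assoc] using this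


lemma intF' (hmom : ∀ (k : ℤ), IntegrableOn (fun x : ℝ => x ^ k * weight lam t x) (Set.Ioi (0:ℝ)))
    (A : Polynomial ℝ) :
    IntegrableOn (fun y : ℝ => (Polynomial.derivative A).eval y * weight lam t y
      + A.eval y * ((lam / y - 2 * y + t / y ^ 2) * weight lam t y)) (Set.Ioi (0:ℝ)) := by
  have h1 := intA0 hmom (Polynomial.derivative A)
  have h2 := (intA0 hmom (Polynomial.X * A)).const_mul (-2 : ℝ)
  have h3 := (intA hmom (-1) A).const_mul lam
  have h4 := (intA hmom (-2) A).const_mul t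
  refine IntegrableOn.congr_fun ((h1.add h2).add (h3.add h4)) (fun y hy => ?_) measurableSet_Ioi
  have hy0 : (y:ℝ) ≠ 0 := ne_of_gt hy
  simp only [Pi.add_apply, Polynomial.eval_mul, Polynomial.eval_X, zpow_neg, zpow_one, zpow_two]
  field_simp
  ring

lemma ibp (hlam : 0 ≤ lam) (ht : 0 < t)
    (hmom : ∀ (k : ℤ), IntegrableOn (fun x : ℝ => x ^ k * weight lam t x) (Set.Ioi (0:ℝ)))
    (A : Polynomial ℝ) :
    ∫ y in Set.Ioi (0:ℝ), ((Polynomial.derivative A).eval y * weight lam t y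
      + A.eval y * ((lam / y - 2 * y + t / y ^ 2) * weight lam t y)) = 0 := by
  set f : ℝ → ℝ := fun y => A.eval y * weight lam t y with hf
  set F : ℝ → ℝ := fun y => if y = 0 then 0 else f y with hFdef
  have hF0 : F 0 = 0 := by simp [hFdef]
  have hderiv : ∀ x ∈ Set.Ioi (0:ℝ), HasDerivAt F
      ((Polynomial.derivative A).eval x * weight lam t x
        + A.eval x * ((lam / x - 2 * x + t / x ^ 2) * weight lam t x)) x := by
    intro x hx
    have h := (Polynomial.hasDerivAt A x).mul (hasDerivAt_weight (lam := lam) ht hx)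
    refine HasDerivAt.congr_of_eventuallyEq h ?_
    filter_upwards [eventually_ne_nhds (ne_of_gt hx)] with y hy
    simp [hFdef, hy, hf]
  have hcont : ContinuousWithinAt F (Set.Ici (0:ℝ)) 0 := by
    rw [ContinuousWithinAt, hF0]
    rw [show Set.Ici (0:ℝ) = insert 0 (Set.Ioi 0) from Set.Ioi_insert.symm]
    rw [nhdsWithin_insert, Filter.tendsto_sup]
    constructor
    · simpa [hF0] using tendsto_pure_nhds F 0
    · refine (tendsto_weight_zero hlam ht A).congr' ?_
      filter_upwards [self_mem_nhdsWithin] with y hy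
      simp [hFdef, (ne_of_gt (Set.mem_Ioi.mp hy)), hf]
  have htop : Tendsto F atTop (𝓝 0) := by
    refine (tendsto_weight_atTop (lam := lam) ht A).congr' ?_
    filter_upwards [eventually_gt_atTop (0:ℝ)] with y hy
    simp [hFdef, (ne_of_gt hy), hf]
  have := integral_Ioi_of_hasDerivAt_of_tendsto hcont hderiv (intF' hmom A) htop
  rw [this, hF0, sub_zero]


/-- `Jk k A = ∫₀^∞ A(x) x^k w(x) dx`. -/
noncomputable def Jk (lam t : ℝ) (k : ℤ) (A : Polynomial ℝ) : ℝ :=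
  ∫ x in Set.Ioi (0:ℝ), A.eval x * ((x:ℝ) ^ k * weight lam t x)

lemma ibp_split (hlam : 0 ≤ lam) (ht : 0 < t)
    (hmom : ∀ (k : ℤ), IntegrableOn (fun x : ℝ => x ^ k * weight lam t x) (Set.Ioi (0:ℝ)))
    (A : Polynomial ℝ) :
    Jw lam t (Polynomial.derivative A) + lam * Jk lam t (-1) A
      - 2 * Jw lam t (Polynomial.X * A) + t * Jk lam t (-2) A = 0 := by
  have h0 := ibp hlam ht hmom A
  have h1 := intA0 hmom (Polynomial.derivative A)
  have h2 := (intA0 hmom (Polynomial.X * A)).const_mul (-2 : ℝ)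
  have h3 := (intA hmom (-1) A).const_mul lam
  have h4 := (intA hmom (-2) A).const_mul t
  have heq : ∫ y in Set.Ioi (0:ℝ), ((Polynomial.derivative A).eval y * weight lam t y
      + A.eval y * ((lam/y - 2*y + t/y^2) * weight lam t y))
      = ∫ y in Set.Ioi (0:ℝ), (((Polynomial.derivative A).eval y * weight lam t y
          + (-2) * ((Polynomial.X*A).eval y * weight lam t y))
        + (lam * (A.eval y * ((y:ℝ) ^ (-1:ℤ) * weight lam t y))
          + t * (A.eval y * ((y:ℝ) ^ (-2:ℤ) * weight lam t y)))) := by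
    apply setIntegral_congr_fun measurableSet_Ioi
    intro y hy
    have hy0 : (y:ℝ) ≠ 0 := ne_of_gt hy
    simp only [Polynomial.eval_mul, Polynomial.eval_X, zpow_neg, zpow_one, zpow_two]
    field_simp
    ring
  have h12 : Integrable (fun y : ℝ => (Polynomial.derivative A).eval y * weight lam t y
      + (-2) * ((Polynomial.X*A).eval y * weight lam t y)) (volume.restrict (Set.Ioi 0)) :=
    h1.add h2
  have h34 : Integrable (fun y : ℝ => lam * (A.eval y * ((y:ℝ) ^ (-1:ℤ) * weight lam t y))
      + t * (A.eval y * ((y:ℝ) ^ (-2:ℤ) * weight lam t y))) (volume.restrict (Set.Ioi 0)) :=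
    h3.add h4
  rw [heq, integral_add h12 h34, integral_add h1 h2, integral_add h3 h4,
    integral_const_mul, integral_const_mul, integral_const_mul] at h0
  unfold Jw Jk
  linarith [h0]

lemma key_identity (S : SingLaguerreOPS lam) (hlam : 0 ≤ lam) (ht : 0 < t)
    (n : ℕ) (hn : 1 ≤ n) :
    lam * Jk lam t (-1) (S.P n t * S.P (n-1) t)
      + t * Jk lam t (-2) (S.P n t * S.P (n-1) t)
      = (2 * S.β n t - n) * S.h (n-1) t := by
  have hmom : ∀ (k : ℤ), IntegrableOn (fun x : ℝ => x ^ k * weight lam t x) (Set.Ioi (0:ℝ)) :=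
    fun k => S.moments k t ht
  have h0 := ibp_split hlam ht hmom (S.P n t * S.P (n-1) t)
  have hD : Jw lam t (Polynomial.derivative (S.P n t * S.P (n-1) t)) = n * S.h (n-1) t := by
    rw [Polynomial.derivative_mul, Jw_add S ht, Jw_deriv1 S ht n hn, Jw_deriv2 S ht n hn,
      add_zero]
  have hX : Jw lam t (Polynomial.X * (S.P n t * S.P (n-1) t)) = S.β n t * S.h (n-1) t := by
    rw [← mul_assoc]
    exact Jw_X S ht n hn
  rw [hD, hX] at h0
  linarith [h0]

end Aux

theorem statement1 (lam t : ℝ) (hlam : 0 ≤ lam) (ht : 0 < t)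
    (S : SingLaguerreOPS lam) (n : ℕ) (hn : 1 ≤ n) (z : ℝ) (hz : 0 < z) :
    (1 / S.h (n-1) t) *
      ∫ y in Set.Ioi (0:ℝ),
        (vprime lam t z - vprime lam t y) / (z - y)
          * ((S.P n t).eval y * (S.P (n-1) t).eval y) * weight lam t y
    = (2 * S.β n t - n) / z + rn lam S n t / z ^ 2 := by
  have hmom : ∀ (k : ℤ), IntegrableOn (fun x : ℝ => x ^ k * weight lam t x) (Set.Ioi (0:ℝ)) :=
    fun k => S.moments k t ht
  set A : Polynomial ℝ := S.P n t * S.P (n-1) t with hA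
  have hz0 : z ≠ 0 := ne_of_gt hz
  have hh0 : S.h (n-1) t ≠ 0 := ne_of_gt (S.h_pos (n-1) t ht)
  -- a.e. rewrite of the integrand
  have hae : (fun y : ℝ => (vprime lam t z - vprime lam t y) / (z - y)
        * ((S.P n t).eval y * (S.P (n-1) t).eval y) * weight lam t y)
      =ᵐ[volume.restrict (Set.Ioi (0:ℝ))]
      (fun y : ℝ => 2 * (A.eval y * weight lam t y)
        + ((lam/z + t/z^2) * (A.eval y * ((y:ℝ) ^ (-1:ℤ) * weight lam t y))
          + (t/z) * (A.eval y * ((y:ℝ) ^ (-2:ℤ) * weight lam t y)))) := by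
    have h1 : ∀ᵐ y : ℝ ∂volume, y ≠ z := by
      refine ae_iff.mpr ?_
      have hset : {y : ℝ | ¬ y ≠ z} = {z} := by ext y; simp
      rw [hset]
      exact Real.volume_singleton
    filter_upwards [ae_restrict_mem measurableSet_Ioi, ae_restrict_of_ae h1] with y hy hyz
    have hy0 : (0:ℝ) < y := hy
    have hy0' : y ≠ 0 := ne_of_gt hy0
    have hzy : z - y ≠ 0 := sub_ne_zero_of_ne (Ne.symm hyz)
    have hv : vprime lam t z - vprime lam t y
        = (z - y) * (2 + lam/(z*y) + t*(z+y)/(z^2*y^2)) := by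
      unfold vprime
      field_simp
      ring
    rw [hv, mul_comm (z - y), mul_div_assoc, div_self hzy, mul_one]
    simp only [hA, Polynomial.eval_mul, zpow_neg, zpow_one, zpow_two]
    field_simp
    ring
  have hI : (∫ y in Set.Ioi (0:ℝ), (vprime lam t z - vprime lam t y) / (z - y)
        * ((S.P n t).eval y * (S.P (n-1) t).eval y) * weight lam t y)
      = 2 * Jw lam t A + ((lam/z + t/z^2) * Jk lam t (-1) A + (t/z) * Jk lam t (-2) A) := by
    rw [integral_congr_ae hae]
    have i0 := (intA0 hmom A).const_mul (2:ℝ)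
    have i1 := (intA hmom (-1) A).const_mul (lam/z + t/z^2)
    have i2 := (intA hmom (-2) A).const_mul (t/z)
    have i12 : Integrable (fun y : ℝ =>
        (lam/z + t/z^2) * (A.eval y * ((y:ℝ) ^ (-1:ℤ) * weight lam t y))
        + (t/z) * (A.eval y * ((y:ℝ) ^ (-2:ℤ) * weight lam t y)))
        (volume.restrict (Set.Ioi 0)) := i1.add i2
    rw [integral_add i0 i12, integral_add i1 i2, integral_const_mul, integral_const_mul,
      integral_const_mul]
    rfl
  have hJwA : Jw lam t A = 0 := by
    rw [hA, Jw_orth S ht n (n-1), if_neg (by omega : n ≠ n - 1)]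
  have hrn : rn lam S n t = t / S.h (n-1) t * Jk lam t (-1) A := by
    unfold rn Jk
    congr 1
    apply setIntegral_congr_fun measurableSet_Ioi
    intro y hy
    have hy0 : (y:ℝ) ≠ 0 := ne_of_gt hy
    have hne : ¬ n = 0 := by omega
    simp only [hne, if_false, hA, Polynomial.eval_mul, zpow_neg, zpow_one]
    field_simp
  have hkey := key_identity S hlam ht n hn
  rw [hI, hJwA, hrn]
  set J1 := Jk lam t (-1) A with hJ1
  set J2 := Jk lam t (-2) A with hJ2
  have hs : (lam/z + t/z^2) * J1 + (t/z) * J2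
      = (2 * S.β n t - n) * S.h (n-1) t / z + t * J1 / z^2 := by
    field_simp
    linear_combination z * hkey
  rw [mul_zero, zero_add, hs]
  field_simp
end

section
/- For every integer n ≥ 0, integration by parts yields (λ/h_n(t)) ∫₀^∞ y^{−1} P_n(y;t)² w(y;t) dy = 2α_n(t) − (t/h_n(t)) ∫₀^∞ y^{−2} P_n(y;t)² w(y;t) dy. -/
open MeasureTheory Real Filter
open Polynomial Set

variable {lam t : ℝ}

noncomputable def Jint (lam t : ℝ) (q : Polynomial ℝ) (k : ℤ) : ℝ :=
  ∫ y in Set.Ioi (0:ℝ), q.eval y * y ^ k * weight lam t y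

variable {lam t : ℝ}

theorem intgr (hmom : ∀ (k : ℤ), IntegrableOn (fun x : ℝ => x ^ k * weight lam t x) (Set.Ioi (0:ℝ)))
    (q : Polynomial ℝ) (k : ℤ) :
    IntegrableOn (fun y => q.eval y * y ^ k * weight lam t y) (Set.Ioi (0:ℝ)) := by
  have heq : Set.EqOn (fun y => q.eval y * y ^ k * weight lam t y)
      (fun y => ∑ j ∈ Finset.range (q.natDegree + 1),
        q.coeff j * (y ^ ((j : ℤ) + k) * weight lam t y)) (Set.Ioi (0:ℝ)) := by
    intro y hy
    have hy0 : y ≠ 0 := (ne_of_gt hy)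
    simp only
    rw [Polynomial.eval_eq_sum_range, Finset.sum_mul, Finset.sum_mul]
    refine Finset.sum_congr rfl fun j _ => ?_
    rw [zpow_add₀ hy0, zpow_natCast]
    ring
  refine IntegrableOn.congr_fun ?_ heq.symm measurableSet_Ioi
  exact integrable_finset_sum _ fun j _ => (hmom ((j : ℤ) + k)).const_mul _

theorem Jint_add (hmom : ∀ (k : ℤ), IntegrableOn (fun x : ℝ => x ^ k * weight lam t x) (Set.Ioi (0:ℝ)))
    (q r : Polynomial ℝ) (k : ℤ) : Jint lam t (q + r) k = Jint lam t q k + Jint lam t r k := by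
  unfold Jint
  rw [← integral_add (intgr hmom q k) (intgr hmom r k)]
  refine congrArg _ (funext fun y => ?_)
  simp [Polynomial.eval_add]; ring

theorem Jint_zero (k : ℤ) : Jint lam t 0 k = 0 := by
  unfold Jint; simp

theorem Jint_const_mul (c : ℝ) (q : Polynomial ℝ) (k : ℤ) :
    Jint lam t (Polynomial.C c * q) k = c * Jint lam t q k := by
  unfold Jint
  rw [← integral_const_mul]
  refine congrArg _ (funext fun y => ?_)
  simp; ring

theorem Jint_sum (hmom : ∀ (k : ℤ), IntegrableOn (fun x : ℝ => x ^ k * weight lam t x) (Set.Ioi (0:ℝ)))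
    {ι : Type*} (s : Finset ι) (f : ι → Polynomial ℝ) (k : ℤ) :
    Jint lam t (∑ i ∈ s, f i) k = ∑ i ∈ s, Jint lam t (f i) k := by
  classical
  induction s using Finset.induction_on with
  | empty => simp [Jint_zero]
  | insert a s h ih => rw [Finset.sum_insert h, Finset.sum_insert h, Jint_add hmom, ih]

theorem Jint_mul_eq (q r : Polynomial ℝ) :
    Jint lam t (q * r) 0 = ∫ y in Set.Ioi (0:ℝ), q.eval y * r.eval y * weight lam t y := by
  unfold Jint
  refine congrArg _ (funext fun y => ?_)
  simp

theorem orth_monomial (S : SingLaguerreOPS lam) (ht : 0 < t) (n : ℕ) :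
    ∀ m, m < n → Jint lam t (X ^ m * S.P n t) 0 = 0 := by
  have hmom := fun k => S.moments k t ht
  intro m
  induction m using Nat.strong_induction_on with
  | _ m ih =>
    intro hmn
    set d := (X:ℝ[X]) ^ m - S.P m t with hd
    have hX : (X:ℝ[X]) ^ m * S.P n t = S.P m t * S.P n t + d * S.P n t := by
      rw [hd]; ring
    rw [hX, Jint_add hmom, Jint_mul_eq, S.orth m n t ht, if_neg (by omega), zero_add]
    have hdlt : d = 0 ∨ d.natDegree < m := by
      by_cases h0 : d = 0
      · exact Or.inl h0
      · right
        have hle : d.natDegree ≤ m := le_trans (Polynomial.natDegree_sub_le _ _)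
          (by simp [Polynomial.natDegree_X_pow, S.natDegree_eq m t ht])
        rcases lt_or_eq_of_le hle with h | h
        · exact h
        · exfalso
          have hcoeff : d.coeff m = 0 := by
            have h1 : ((X:ℝ[X]) ^ m).coeff m = 1 := by simp
            have h2 : (S.P m t).coeff m = 1 := by
              have := S.monic m t ht
              rw [Polynomial.Monic, Polynomial.leadingCoeff, S.natDegree_eq m t ht] at this
              exact this
            simp [hd, h1, h2]
          exact h0 (Polynomial.leadingCoeff_eq_zero.mp (by rwa [Polynomial.leadingCoeff, h]))
    rcases hdlt with h0 | hlt
    · rw [h0, zero_mul, Jint_zero]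
    · have hexp : d * S.P n t = ∑ j ∈ Finset.range (d.natDegree + 1),
          Polynomial.C (d.coeff j) * ((X:ℝ[X]) ^ j * S.P n t) := by
        conv_lhs => rw [Polynomial.as_sum_range' d (d.natDegree + 1) (lt_add_one _)]
        rw [Finset.sum_mul]
        refine Finset.sum_congr rfl fun j _ => ?_
        rw [← Polynomial.C_mul_X_pow_eq_monomial]; ring
      rw [hexp, Jint_sum hmom]
      refine Finset.sum_eq_zero fun j hj => ?_
      have hjm : j < m := by
        have := Finset.mem_range.mp hj; omega
      rw [Jint_const_mul, ih j hjm (by omega), mul_zero]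

theorem orth_low (S : SingLaguerreOPS lam) (ht : 0 < t) (n : ℕ) (q : Polynomial ℝ)
    (hq : q.natDegree < n ∨ q = 0) : Jint lam t (q * S.P n t) 0 = 0 := by
  have hmom := fun k => S.moments k t ht
  rcases hq with hq | rfl
  · have hexp : q * S.P n t = ∑ j ∈ Finset.range (q.natDegree + 1),
        Polynomial.C (q.coeff j) * ((X:ℝ[X]) ^ j * S.P n t) := by
      conv_lhs => rw [Polynomial.as_sum_range' q (q.natDegree + 1) (lt_add_one _)]
      rw [Finset.sum_mul]
      refine Finset.sum_congr rfl fun j _ => ?_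
      rw [← Polynomial.C_mul_X_pow_eq_monomial]; ring
    rw [hexp, Jint_sum hmom]
    refine Finset.sum_eq_zero fun j hj => ?_
    have hjn : j < n := by have := Finset.mem_range.mp hj; omega
    rw [Jint_const_mul, orth_monomial S ht n j hjn, mul_zero]
  · rw [zero_mul, Jint_zero]

theorem J_X_mul_sq (S : SingLaguerreOPS lam) (ht : 0 < t) (n : ℕ) :
    Jint lam t (X * (S.P n t) ^ 2) 0 = S.α n t * S.h n t := by
  have hmom := fun k => S.moments k t ht
  have hrec := S.recur n t ht
  have hsplit : (X:ℝ[X]) * (S.P n t) ^ 2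
      = S.P (n+1) t * S.P n t + (Polynomial.C (S.α n t) * (S.P n t * S.P n t)
        + Polynomial.C (S.β n t) * ((if n = 0 then 0 else S.P (n-1) t) * S.P n t)) := by
    calc (X:ℝ[X]) * (S.P n t) ^ 2 = (X * S.P n t) * S.P n t := by ring
    _ = _ := by rw [hrec]; ring
  rw [hsplit, Jint_add hmom, Jint_add hmom, Jint_mul_eq, S.orth (n+1) n t ht, if_neg (by omega),
    Jint_const_mul, Jint_const_mul, Jint_mul_eq, S.orth n n t ht, if_pos rfl]
  have hlast : Jint lam t ((if n = 0 then 0 else S.P (n-1) t) * S.P n t) 0 = 0 := by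
    by_cases hn : n = 0
    · rw [if_pos hn, zero_mul, Jint_zero]
    · rw [if_neg hn, Jint_mul_eq, S.orth (n-1) n t ht, if_neg (by omega)]
  rw [hlast, mul_zero, add_zero, zero_add]

theorem ftc (hmom : ∀ (k : ℤ), IntegrableOn (fun x : ℝ => x ^ k * weight lam t x) (Set.Ioi (0:ℝ)))
    (hlam : 0 ≤ lam) (ht : 0 < t) (p : Polynomial ℝ) :
    Jint lam t (derivative (p ^ 2)) 0 + (lam * Jint lam t (p ^ 2) (-1)
      + ((-2) * Jint lam t (p ^ 2) 1 + t * Jint lam t (p ^ 2) (-2))) = 0 := by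
  set F : ℝ → ℝ := fun y => if y ≤ 0 then 0 else (p.eval y) ^ 2 * weight lam t y with hF
  set g : ℝ → ℝ := fun y =>
      (derivative (p ^ 2)).eval y * y ^ (0:ℤ) * weight lam t y
      + (lam * ((p ^ 2).eval y * y ^ (-1:ℤ) * weight lam t y)
      + ((-2) * ((p ^ 2).eval y * y ^ (1:ℤ) * weight lam t y)
      + t * ((p ^ 2).eval y * y ^ (-2:ℤ) * weight lam t y))) with hg
  have iA := intgr hmom (derivative (p ^ 2)) 0
  have iB := (intgr hmom (p ^ 2) (-1)).const_mul lam
  have iC := (intgr hmom (p ^ 2) 1).const_mul (-2 : ℝ)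
  have iD := (intgr hmom (p ^ 2) (-2)).const_mul t
  have hgint : IntegrableOn g (Set.Ioi (0:ℝ)) := iA.add (iB.add (iC.add iD))
  -- derivative
  have hderiv : ∀ y ∈ Set.Ioi (0:ℝ), HasDerivAt F (g y) y := by
    intro y hy
    have hy0 : (0:ℝ) < y := hy
    have hyne : y ≠ 0 := hy0.ne'
    have hpoly : HasDerivAt (fun x => (p.eval x) ^ 2) ((derivative (p ^ 2)).eval y) y := by
      have h0 := (p ^ 2).hasDerivAt y
      have hfe : (fun x => Polynomial.eval x (p ^ 2)) = fun x => (p.eval x) ^ 2 :=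
        funext fun x => by simp [Polynomial.eval_pow]
      rwa [hfe] at h0
    have hrpow : HasDerivAt (fun x : ℝ => x ^ lam) (lam * y ^ (lam - 1)) y :=
      Real.hasDerivAt_rpow_const (Or.inl hyne)
    have hsq : HasDerivAt (fun x : ℝ => -x ^ 2 - t / x) (-(2 * y) - t * -(y ^ 2)⁻¹) y := by
      have h1 : HasDerivAt (fun x : ℝ => x ^ 2) (2 * y) y := by
        simpa using hasDerivAt_pow 2 y
      have h2 : HasDerivAt (fun x : ℝ => t * x⁻¹) (t * -(y ^ 2)⁻¹) y :=
        (hasDerivAt_inv hyne).const_mul t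
      simpa [div_eq_mul_inv] using h1.fun_neg.fun_sub h2
    have hw : HasDerivAt (fun x : ℝ => weight lam t x)
        (lam * y ^ (lam - 1) * Real.exp (-y ^ 2 - t / y)
          + y ^ lam * (Real.exp (-y ^ 2 - t / y) * (-(2 * y) - t * -(y ^ 2)⁻¹))) y := by
      simpa [weight] using hrpow.fun_mul hsq.exp
    have hG : HasDerivAt (fun x => (p.eval x) ^ 2 * weight lam t x)
        ((derivative (p ^ 2)).eval y * weight lam t y
          + (p.eval y) ^ 2 * (lam * y ^ (lam - 1) * Real.exp (-y ^ 2 - t / y)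
            + y ^ lam * (Real.exp (-y ^ 2 - t / y) * (-(2 * y) - t * -(y ^ 2)⁻¹)))) y :=
      hpoly.mul hw
    have hFG : F =ᶠ[nhds y] (fun x => (p.eval x) ^ 2 * weight lam t x) := by
      filter_upwards [isOpen_Ioi.mem_nhds hy] with x hx
      simp [hF, not_le.mpr (show (0:ℝ) < x from hx)]
    have heq : (derivative (p ^ 2)).eval y * weight lam t y
          + (p.eval y) ^ 2 * (lam * y ^ (lam - 1) * Real.exp (-y ^ 2 - t / y)
            + y ^ lam * (Real.exp (-y ^ 2 - t / y) * (-(2 * y) - t * -(y ^ 2)⁻¹))) = g y := by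
      have h1 : y ^ (lam - 1) = y ^ lam / y := by
        rw [Real.rpow_sub hy0, Real.rpow_one]
      simp only [hg, weight, h1, Polynomial.eval_pow, zpow_zero, zpow_neg, zpow_one, zpow_two]
      field_simp
      ring
    exact (hG.congr_of_eventuallyEq hFG).congr_deriv heq
  -- continuity at 0 within Ici 0
  have hcont : ContinuousWithinAt F (Set.Ici (0:ℝ)) 0 := by
    have hF0 : F 0 = 0 := by simp [hF]
    rw [ContinuousWithinAt, hF0]
    have hIci : Set.Ici (0:ℝ) = insert 0 (Set.Ioi 0) := by
      rw [Set.Ioi_insert]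
    rw [hIci, nhdsWithin_insert]
    rw [tendsto_sup]
    constructor
    · rw [tendsto_pure_left]
      intro s hs
      simpa [hF0] using mem_of_mem_nhds hs
    · -- squeeze on 𝓝[>] 0
      have hbound : ∀ᶠ x in nhdsWithin 0 (Set.Ioi 0),
          F x ≤ (p.eval x) ^ 2 * Real.exp (-(t / x)) := by
        filter_upwards [Ioc_mem_nhdsGT_of_mem (show (0:ℝ) ∈ Set.Ico (0:ℝ) 1 by norm_num)]
          with x hx
        have hx0 : (0:ℝ) < x := hx.1
        have h1 : x ^ lam ≤ 1 := Real.rpow_le_one hx0.le hx.2 hlam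
        have h2 : Real.exp (-x ^ 2 - t / x) ≤ Real.exp (-(t / x)) := by
          apply Real.exp_le_exp.mpr; nlinarith [sq_nonneg x]
        have : F x = (p.eval x) ^ 2 * (x ^ lam * Real.exp (-x ^ 2 - t / x)) := by
          simp [hF, not_le.mpr hx0, weight, mul_assoc]
        rw [this]
        calc (p.eval x) ^ 2 * (x ^ lam * Real.exp (-x ^ 2 - t / x))
            ≤ (p.eval x) ^ 2 * (1 * Real.exp (-(t / x))) := by
              apply mul_le_mul_of_nonneg_left _ (sq_nonneg _)
              exact mul_le_mul h1 h2 (Real.exp_pos _).le zero_le_one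
          _ = (p.eval x) ^ 2 * Real.exp (-(t / x)) := by ring
      have hnonneg : ∀ᶠ x in nhdsWithin 0 (Set.Ioi 0), 0 ≤ F x := by
        filter_upwards with x
        by_cases hx : x ≤ 0
        · simp [hF, hx]
        · simp only [hF, if_neg hx, weight]
          push_neg at hx
          positivity
      have hlim : Tendsto (fun x => (p.eval x) ^ 2 * Real.exp (-(t / x)))
          (nhdsWithin 0 (Set.Ioi 0)) (nhds 0) := by
        have h1 : Tendsto (fun x : ℝ => (p.eval x) ^ 2) (nhdsWithin 0 (Set.Ioi 0))
            (nhds ((p.eval 0) ^ 2)) :=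
          ((p.continuous.pow 2).tendsto 0).mono_left nhdsWithin_le_nhds
        have h2 : Tendsto (fun x : ℝ => Real.exp (-(t / x))) (nhdsWithin 0 (Set.Ioi 0))
            (nhds 0) := by
          have ha : Tendsto (fun x : ℝ => t / x) (nhdsWithin 0 (Set.Ioi 0)) atTop := by
            simp only [div_eq_mul_inv]
            exact tendsto_inv_nhdsGT_zero.const_mul_atTop ht
          exact Real.tendsto_exp_neg_atTop_nhds_zero.comp ha
        simpa using h1.mul h2
      exact squeeze_zero' hnonneg hbound hlim
  -- tendsto at top
  have htop : Tendsto F atTop (nhds 0) := by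
    set m : ℕ := ⌈lam⌉₊ with hm
    set Q : Polynomial ℝ := p ^ 2 * X ^ m with hQ
    have hbound : ∀ᶠ x in atTop, F x ≤ Q.eval x / Real.exp x := by
      filter_upwards [eventually_ge_atTop (1:ℝ)] with x hx1
      have hx0 : (0:ℝ) < x := lt_of_lt_of_le one_pos hx1
      have h1 : x ^ lam ≤ (x : ℝ) ^ (m : ℕ) := by
        rw [← Real.rpow_natCast x m]
        exact Real.rpow_le_rpow_of_exponent_le hx1 (Nat.le_ceil lam)
      have h2 : Real.exp (-x ^ 2 - t / x) ≤ Real.exp (-x) := by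
        apply Real.exp_le_exp.mpr
        have ht' : 0 < t / x := div_pos ht hx0
        nlinarith
      have hFx : F x = (p.eval x) ^ 2 * (x ^ lam * Real.exp (-x ^ 2 - t / x)) := by
        simp [hF, not_le.mpr hx0, weight, mul_assoc]
      rw [hFx]
      have : Q.eval x / Real.exp x = (p.eval x) ^ 2 * (x ^ (m:ℕ) * Real.exp (-x)) := by
        rw [Real.exp_neg]
        simp [hQ, Polynomial.eval_pow]
        ring
      rw [this]
      apply mul_le_mul_of_nonneg_left _ (sq_nonneg _)
      exact mul_le_mul h1 h2 (Real.exp_pos _).le (by positivity)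
    have hnonneg : ∀ᶠ x in atTop, 0 ≤ F x := by
      filter_upwards with x
      by_cases hx : x ≤ 0
      · simp [hF, hx]
      · simp only [hF, if_neg hx, weight]
        push_neg at hx
        positivity
    exact squeeze_zero' hnonneg hbound (Q.tendsto_div_exp_atTop)
  have key := integral_Ioi_of_hasDerivAt_of_tendsto hcont hderiv hgint htop
  have hF0 : F 0 = 0 := by simp [hF]
  rw [hF0, zero_sub, neg_zero] at key
  -- split the integral
  have hsplit : ∫ y in Set.Ioi (0:ℝ), g y
      = Jint lam t (derivative (p ^ 2)) 0 + (lam * Jint lam t (p ^ 2) (-1)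
        + ((-2) * Jint lam t (p ^ 2) 1 + t * Jint lam t (p ^ 2) (-2))) := by
    have iBCD : IntegrableOn (fun y : ℝ =>
        lam * ((p ^ 2).eval y * y ^ (-1:ℤ) * weight lam t y)
        + ((-2) * ((p ^ 2).eval y * y ^ (1:ℤ) * weight lam t y)
          + t * ((p ^ 2).eval y * y ^ (-2:ℤ) * weight lam t y))) (Set.Ioi (0:ℝ)) :=
      iB.add (iC.add iD)
    have iCD : IntegrableOn (fun y : ℝ =>
        (-2) * ((p ^ 2).eval y * y ^ (1:ℤ) * weight lam t y)
          + t * ((p ^ 2).eval y * y ^ (-2:ℤ) * weight lam t y)) (Set.Ioi (0:ℝ)) :=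
      iC.add iD
    rw [hg]
    rw [integral_add iA iBCD, integral_add iB iCD, integral_add iC iD]
    rw [integral_const_mul, integral_const_mul, integral_const_mul]
    rfl
  rw [← hsplit, key]


theorem J_D_zero (S : SingLaguerreOPS lam) (ht : 0 < t) (n : ℕ) :
    Jint lam t (Polynomial.derivative ((S.P n t) ^ 2)) 0 = 0 := by
  have hD : Polynomial.derivative ((S.P n t) ^ 2)
      = (Polynomial.C 2 * Polynomial.derivative (S.P n t)) * S.P n t := by
    rw [Polynomial.derivative_pow]
    push_cast
    ring
  rw [hD]
  apply orth_low S ht n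
  by_cases hn : n = 0
  · right
    have hdeg : (S.P n t).natDegree = 0 := by rw [S.natDegree_eq n t ht, hn]
    obtain ⟨c, hc⟩ : ∃ c, S.P n t = Polynomial.C c :=
      ⟨(S.P n t).coeff 0, (Polynomial.eq_C_of_natDegree_eq_zero hdeg)⟩
    rw [hc, Polynomial.derivative_C, mul_zero]
  · left
    calc (Polynomial.C (2:ℝ) * Polynomial.derivative (S.P n t)).natDegree
        ≤ (Polynomial.derivative (S.P n t)).natDegree := Polynomial.natDegree_C_mul_le _ _
      _ < (S.P n t).natDegree :=
          Polynomial.natDegree_derivative_lt (by rw [S.natDegree_eq n t ht]; exact hn)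
      _ = n := S.natDegree_eq n t ht

theorem J_one_eq (S : SingLaguerreOPS lam) (ht : 0 < t) (n : ℕ) :
    Jint lam t ((S.P n t) ^ 2) 1 = S.α n t * S.h n t := by
  rw [← J_X_mul_sq S ht n]
  unfold Jint
  refine congrArg _ (funext fun y => ?_)
  simp only [Polynomial.eval_mul, Polynomial.eval_X, zpow_zero, zpow_one, mul_one]
  ring

theorem statement3 (lam t : ℝ) (hlam : 0 ≤ lam) (ht : 0 < t)
    (S : SingLaguerreOPS lam) (n : ℕ) :
    lam / S.h n t * ∫ y in Set.Ioi (0:ℝ), ((S.P n t).eval y) ^ 2 * weight lam t y / y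
      = 2 * S.α n t
        - t / S.h n t *
            ∫ y in Set.Ioi (0:ℝ), ((S.P n t).eval y) ^ 2 * weight lam t y / y ^ 2 := by
  have hmom := fun k => S.moments k t ht
  have hftc := ftc hmom hlam ht (S.P n t)
  rw [J_D_zero S ht n, J_one_eq S ht n, zero_add] at hftc
  have hmain : lam * Jint lam t ((S.P n t) ^ 2) (-1)
      = 2 * S.α n t * S.h n t - t * Jint lam t ((S.P n t) ^ 2) (-2) := by
    linarith
  have hI1 : (∫ y in Set.Ioi (0:ℝ), ((S.P n t).eval y) ^ 2 * weight lam t y / y)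
      = Jint lam t ((S.P n t) ^ 2) (-1) := by
    unfold Jint
    refine congrArg _ (funext fun y => ?_)
    simp [Polynomial.eval_pow, zpow_neg, div_eq_mul_inv]
    ring
  have hI2 : (∫ y in Set.Ioi (0:ℝ), ((S.P n t).eval y) ^ 2 * weight lam t y / y ^ 2)
      = Jint lam t ((S.P n t) ^ 2) (-2) := by
    unfold Jint
    refine congrArg _ (funext fun y => ?_)
    simp [Polynomial.eval_pow, zpow_neg, div_eq_mul_inv, zpow_two]
    ring
  rw [hI1, hI2]
  have hh : S.h n t ≠ 0 := (S.h_pos n t ht).ne'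
  field_simp
  linear_combination hmain
end

section
/- For every integer n ≥ 1, integration by parts yields (λ/h_{n−1}(t)) ∫₀^∞ y^{−1} P_n(y;t) P_{n−1}(y;t) w(y;t) dy = −n + 2β_n(t) − (t/h_{n−1}(t)) ∫₀^∞ y^{−2} P_n(y;t) P_{n−1}(y;t) w(y;t) dy. -/
open MeasureTheory Real Filter

open Set Polynomial Topology

section aux
variable (lam t : ℝ)

/-- Integrability of `Q(x) x^k w(x)` on `(0,∞)` from the moments assumption. -/
lemma intOnQ (hm : ∀ k : ℤ, IntegrableOn (fun x : ℝ => x ^ k * weight lam t x) (Set.Ioi 0))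
    (Q : Polynomial ℝ) (k : ℤ) :
    IntegrableOn (fun x : ℝ => Q.eval x * (x ^ k * weight lam t x)) (Set.Ioi 0) := by
  induction Q using Polynomial.induction_on' with
  | add p q hp hq =>
      have h2 : IntegrableOn (fun x : ℝ => p.eval x * (x ^ k * weight lam t x)
          + q.eval x * (x ^ k * weight lam t x)) (Set.Ioi 0) := hp.add hq
      refine h2.congr_fun (fun x _ => ?_) measurableSet_Ioi
      simp [add_mul]
  | monomial m a =>
      have : IntegrableOn (fun x : ℝ => a * (x ^ ((m : ℤ) + k) * weight lam t x)) (Set.Ioi 0) :=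
        (hm ((m : ℤ) + k)).const_mul a
      refine this.congr_fun (fun x hx => ?_) measurableSet_Ioi
      have hx0 : (x : ℝ) ≠ 0 := ne_of_gt hx
      simp only [Polynomial.eval_monomial]
      rw [zpow_add₀ hx0, zpow_natCast]
      ring

lemma intOn3 (hm : ∀ k : ℤ, IntegrableOn (fun x : ℝ => x ^ k * weight lam t x) (Set.Ioi 0))
    (A B : Polynomial ℝ) :
    IntegrableOn (fun x : ℝ => A.eval x * B.eval x * weight lam t x) (Set.Ioi 0) := by
  refine (intOnQ lam t hm (A * B) 0).congr_fun (fun x _ => ?_) measurableSet_Ioi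
  simp

/-- Derivative of the weight. -/
lemma weight_hasDerivAt {x : ℝ} (hx : 0 < x) :
    HasDerivAt (weight lam t) ((lam / x - 2 * x + t / x ^ 2) * weight lam t x) x := by
  have hx0 : x ≠ 0 := ne_of_gt hx
  have h1 : HasDerivAt (fun y : ℝ => y ^ lam) (lam * x ^ (lam - 1)) x :=
    Real.hasDerivAt_rpow_const (Or.inl hx0)
  have h2 : HasDerivAt (fun y : ℝ => -y ^ 2 - t / y) (-(2 * x) - t * -(x ^ 2)⁻¹) x := by
    have ha : HasDerivAt (fun y : ℝ => y ^ 2) (2 * x) x := by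
      simpa using hasDerivAt_pow 2 x
    have hb : HasDerivAt (fun y : ℝ => t / y) (t * -(x ^ 2)⁻¹) x := by
      simpa [div_eq_mul_inv] using (hasDerivAt_inv hx0).const_mul t
    exact ha.neg.sub hb
  have h3 : HasDerivAt (fun y : ℝ => Real.exp (-y ^ 2 - t / y))
      (Real.exp (-x ^ 2 - t / x) * (-(2 * x) - t * -(x ^ 2)⁻¹)) x := h2.exp
  have h4 : HasDerivAt (fun y : ℝ => y ^ lam * Real.exp (-y ^ 2 - t / y)) _ x := h1.mul h3
  have hrw : x ^ (lam - 1) = x ^ lam / x := by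
    rw [Real.rpow_sub hx, Real.rpow_one]
  convert h4 using 1
  · rfl
  unfold weight
  rw [hrw]
  field_simp
  ring

end aux

section limits
variable (lam t : ℝ)

lemma tendsto_term_atTop (ht : 0 < t) (i : ℕ) :
    Tendsto (fun x : ℝ => x ^ i * weight lam t x) atTop (𝓝 0) := by
  apply squeeze_zero_norm' (a := fun x : ℝ => x ^ ((i : ℝ) + lam) * Real.exp (-1 * x))
  · filter_upwards [eventually_ge_atTop (1 : ℝ)] with x hx1
    have hx0 : (0 : ℝ) < x := lt_of_lt_of_le one_pos hx1
    have hnn : 0 ≤ x ^ i * weight lam t x := by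
      unfold weight
      positivity
    rw [Real.norm_eq_abs, abs_of_nonneg hnn]
    unfold weight
    rw [← mul_assoc, ← Real.rpow_natCast x i, ← Real.rpow_add hx0]
    apply mul_le_mul_of_nonneg_left _ (Real.rpow_nonneg hx0.le _)
    apply Real.exp_le_exp.mpr
    have h1 : x ≤ x ^ 2 := by nlinarith
    have h2 : 0 < t / x := div_pos ht hx0
    nlinarith
  · exact tendsto_rpow_mul_exp_neg_mul_atTop_nhds_zero _ 1 one_pos

lemma tendsto_term_zero (hlam : 0 ≤ lam) (ht : 0 < t) (i : ℕ) :
    Tendsto (fun x : ℝ => x ^ i * weight lam t x) (nhdsWithin 0 (Set.Ioi 0)) (𝓝 0) := by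
  apply squeeze_zero_norm' (a := fun x : ℝ => Real.exp (-(t * x⁻¹)))
  · filter_upwards [Ioo_mem_nhdsGT (by norm_num : (0:ℝ) < 1)] with x hx
    obtain ⟨hx0, hx1⟩ := hx
    have hnn : 0 ≤ x ^ i * weight lam t x := by
      unfold weight; positivity
    rw [Real.norm_eq_abs, abs_of_nonneg hnn]
    unfold weight
    have b1 : x ^ i ≤ 1 := pow_le_one₀ hx0.le hx1.le
    have b2 : x ^ lam ≤ 1 := Real.rpow_le_one hx0.le hx1.le hlam
    have b3 : Real.exp (-x ^ 2 - t / x) ≤ Real.exp (-(t * x⁻¹)) := by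
      apply Real.exp_le_exp.mpr
      rw [div_eq_mul_inv]
      nlinarith
    calc x ^ i * (x ^ lam * Real.exp (-x ^ 2 - t / x))
        ≤ 1 * (1 * Real.exp (-(t * x⁻¹))) := by
          apply mul_le_mul b1 _ (by positivity) zero_le_one
          exact mul_le_mul b2 b3 (Real.exp_pos _).le zero_le_one
      _ = Real.exp (-(t * x⁻¹)) := by ring
  · have h1 : Tendsto (fun x : ℝ => t * x⁻¹) (nhdsWithin 0 (Set.Ioi 0)) atTop :=
      tendsto_inv_nhdsGT_zero.const_mul_atTop ht
    have := Real.tendsto_exp_neg_atTop_nhds_zero.comp h1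
    exact this

lemma F_eq_sum (Q : Polynomial ℝ) : (fun x : ℝ => Q.eval x * weight lam t x)
    = fun x : ℝ => ∑ i ∈ Finset.range (Q.natDegree + 1), Q.coeff i * (x ^ i * weight lam t x) := by
  funext x
  rw [Polynomial.eval_eq_sum_range, Finset.sum_mul]
  exact Finset.sum_congr rfl fun i _ => by ring

lemma F_tendsto_atTop (ht : 0 < t) (Q : Polynomial ℝ) :
    Tendsto (fun x : ℝ => Q.eval x * weight lam t x) atTop (𝓝 0) := by
  rw [F_eq_sum]
  have h := tendsto_finset_sum (Finset.range (Q.natDegree + 1))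
    (fun i (_ : i ∈ Finset.range (Q.natDegree + 1)) =>
      (tendsto_term_atTop lam t ht i).const_mul (Q.coeff i))
  simpa using h

lemma F_tendsto_zero (hlam : 0 ≤ lam) (ht : 0 < t) (Q : Polynomial ℝ) :
    Tendsto (fun x : ℝ => Q.eval x * weight lam t x) (nhdsWithin 0 (Set.Ioi 0)) (𝓝 0) := by
  rw [F_eq_sum]
  have h := tendsto_finset_sum (Finset.range (Q.natDegree + 1))
    (fun i (_ : i ∈ Finset.range (Q.natDegree + 1)) =>
      (tendsto_term_zero lam t hlam ht i).const_mul (Q.coeff i))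
  simpa using h

end limits

section ibp
variable (lam t : ℝ)

lemma ibp_hasDerivAt (Q : Polynomial ℝ) {x : ℝ} (hx : 0 < x) :
    HasDerivAt (fun y : ℝ => Q.eval y * weight lam t y)
      ((Q.derivative.eval x + Q.eval x * (lam / x - 2 * x + t / x ^ 2)) * weight lam t x) x := by
  have h : HasDerivAt (fun y : ℝ => Q.eval y * weight lam t y) _ x :=
    (Q.hasDerivAt x).mul (weight_hasDerivAt lam t hx)
  convert h using 1
  ring

lemma ibp_deriv_integrable
    (hm : ∀ k : ℤ, IntegrableOn (fun x : ℝ => x ^ k * weight lam t x) (Set.Ioi 0))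
    (Q : Polynomial ℝ) :
    IntegrableOn (fun x : ℝ =>
      (Q.derivative.eval x + Q.eval x * (lam / x - 2 * x + t / x ^ 2)) * weight lam t x)
      (Set.Ioi 0) := by
  have h0 := intOnQ lam t hm Q.derivative 0
  have h1 := (intOnQ lam t hm Q (-1)).const_mul lam
  have hx1 := (intOnQ lam t hm Q 1).const_mul (2 : ℝ)
  have h2 := (intOnQ lam t hm Q (-2)).const_mul t
  have hsum : IntegrableOn (fun x : ℝ =>
      Q.derivative.eval x * (x ^ (0:ℤ) * weight lam t x)
        + lam * (Q.eval x * (x ^ (-1:ℤ) * weight lam t x))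
        - 2 * (Q.eval x * (x ^ (1:ℤ) * weight lam t x))
        + t * (Q.eval x * (x ^ (-2:ℤ) * weight lam t x))) (Set.Ioi 0) :=
    ((h0.add h1).sub hx1).add h2
  refine hsum.congr_fun (fun x hx => ?_) measurableSet_Ioi
  have hx0 : (x : ℝ) ≠ 0 := ne_of_gt hx
  simp only [zpow_zero, zpow_one, zpow_neg, zpow_ofNat, one_mul]
  field_simp
  ring

set_option maxHeartbeats 1000000 in
lemma ibp_integral_eq_zero (hlam : 0 ≤ lam) (ht : 0 < t)
    (hm : ∀ k : ℤ, IntegrableOn (fun x : ℝ => x ^ k * weight lam t x) (Set.Ioi 0))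
    (Q : Polynomial ℝ) :
    ∫ x in Set.Ioi (0:ℝ),
      (Q.derivative.eval x + Q.eval x * (lam / x - 2 * x + t / x ^ 2)) * weight lam t x = 0 := by
  set F := fun x : ℝ => Q.eval x * weight lam t x with hF
  set G := fun x : ℝ =>
    (Q.derivative.eval x + Q.eval x * (lam / x - 2 * x + t / x ^ 2)) * weight lam t x with hG
  have hint : IntegrableOn G (Set.Ioi 0) := ibp_deriv_integrable lam t hm Q
  set a : ℕ → ℝ := fun m => ((m : ℝ) + 2)⁻¹ with ha_def
  set b : ℕ → ℝ := fun m => (m : ℝ) + 1 with hb_def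
  have ha_pos : ∀ m, 0 < a m := fun m => by positivity
  have hab : ∀ m, a m ≤ b m := by
    intro m
    have h1 : a m ≤ 1 := by
      rw [ha_def]
      apply inv_le_one_of_one_le₀
      linarith [Nat.cast_nonneg (α := ℝ) m]
    have h2 : (1:ℝ) ≤ b m := by
      rw [hb_def]
      simp [Nat.cast_nonneg]
    linarith
  have ha0 : Tendsto a atTop (nhdsWithin 0 (Set.Ioi 0)) := by
    rw [tendsto_nhdsWithin_iff]
    constructor
    · exact (tendsto_atTop_add_const_right atTop 2 tendsto_natCast_atTop_atTop).inv_tendsto_atTop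
    · exact Eventually.of_forall fun m => ha_pos m
  have hb : Tendsto b atTop atTop :=
    tendsto_atTop_add_const_right atTop 1 tendsto_natCast_atTop_atTop
  have hFTC : ∀ m, ∫ x in Set.Ioc (a m) (b m), G x = F (b m) - F (a m) := by
    intro m
    rw [← intervalIntegral.integral_of_le (hab m)]
    apply intervalIntegral.integral_eq_sub_of_hasDerivAt
    · intro x hx
      rw [Set.uIcc_of_le (hab m)] at hx
      exact ibp_hasDerivAt lam t Q (lt_of_lt_of_le (ha_pos m) hx.1)
    · apply IntegrableOn.intervalIntegrable
      apply hint.mono_set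
      rw [Set.uIcc_of_le (hab m)]
      intro x hx
      exact lt_of_lt_of_le (ha_pos m) hx.1
  have hcov : AECover (volume.restrict (Set.Ioi (0:ℝ))) atTop
      (fun m => Set.Ioc (a m) (b m)) := by
    constructor
    · filter_upwards [ae_restrict_mem measurableSet_Ioi] with x hx
      have h1 : ∀ᶠ m in atTop, a m < x :=
        (ha0.mono_right nhdsWithin_le_nhds).eventually_lt_const hx
      have h2 : ∀ᶠ m in atTop, x ≤ b m := hb.eventually_ge_atTop x
      filter_upwards [h1, h2] with m hm1 hm2
      exact ⟨hm1, hm2⟩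
    · exact fun m => measurableSet_Ioc
  have h1 := hcov.integral_tendsto_of_countably_generated hint
  have h2 : ∀ m, ∫ x in Set.Ioc (a m) (b m), G x ∂(volume.restrict (Set.Ioi 0))
      = ∫ x in Set.Ioc (a m) (b m), G x := by
    intro m
    rw [Measure.restrict_restrict measurableSet_Ioc, Set.inter_eq_self_of_subset_left]
    intro x hx
    exact lt_of_lt_of_le (ha_pos m) hx.1.le
  have h3 : Tendsto (fun m => F (b m) - F (a m)) atTop (𝓝 0) := by
    have hFt := (F_tendsto_atTop lam t ht Q).comp hb
    have hF0 := (F_tendsto_zero lam t hlam ht Q).comp ha0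
    simpa using hFt.sub hF0
  have h4 : Tendsto (fun m => ∫ x in Set.Ioc (a m) (b m), G x ∂(volume.restrict (Set.Ioi 0)))
      atTop (𝓝 0) := by
    refine h3.congr fun m => ?_
    rw [h2 m, hFTC m]
  exact tendsto_nhds_unique h1 h4

end ibp

section algebra
variable (lam t : ℝ)

lemma split3 (hm : ∀ k : ℤ, IntegrableOn (fun x : ℝ => x ^ k * weight lam t x) (Set.Ioi 0))
    (R D M : Polynomial ℝ) (c : ℝ) :
    ∫ x in Set.Ioi (0:ℝ), (R + Polynomial.C c * D).eval x * M.eval x * weight lam t x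
      = (∫ x in Set.Ioi (0:ℝ), R.eval x * M.eval x * weight lam t x)
        + c * ∫ x in Set.Ioi (0:ℝ), D.eval x * M.eval x * weight lam t x := by
  have hR := intOn3 lam t hm R M
  have hD := (intOn3 lam t hm D M).const_mul c
  have he : Set.EqOn (fun x : ℝ => (R + Polynomial.C c * D).eval x * M.eval x * weight lam t x)
      (fun x : ℝ => R.eval x * M.eval x * weight lam t x
        + c * (D.eval x * M.eval x * weight lam t x)) (Set.Ioi 0) := by
    intro x _
    simp only [Polynomial.eval_add, Polynomial.eval_mul, Polynomial.eval_C]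
    ring
  rw [setIntegral_congr_fun measurableSet_Ioi he, integral_add hR hD, integral_const_mul]

lemma orth_lt (ht : 0 < t) (S : SingLaguerreOPS lam) (m : ℕ) :
    ∀ d : ℕ, ∀ Q : Polynomial ℝ, Q.natDegree ≤ d → Q.degree < (m : ℕ) →
    ∫ x in Set.Ioi (0:ℝ), Q.eval x * (S.P m t).eval x * weight lam t x = 0 := by
  have hm := fun k => S.moments k t ht
  intro d
  induction d with
  | zero =>
      intro Q hQd hQm
      by_cases hQ0 : Q = 0
      · simp [hQ0]
      have hm0 : 0 < m := by
        rcases Nat.eq_zero_or_pos m with hm' | hm'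
        · exfalso
          rw [hm'] at hQm
          exact absurd ((Polynomial.natDegree_lt_iff_degree_lt hQ0).mpr hQm) (by omega)
        · exact hm'
      have hc : Q = Polynomial.C (Q.coeff 0) := Polynomial.eq_C_of_natDegree_le_zero hQd
      have horth := S.orth 0 m t ht
      rw [S.P_zero t ht, if_neg (by omega : 0 ≠ m)] at horth
      simp only [Polynomial.eval_one, one_mul] at horth
      rw [hc]
      simp only [Polynomial.eval_C]
      simp only [mul_assoc]
      rw [integral_const_mul, horth, mul_zero]
  | succ d ih =>
      intro Q hQd hQm
      by_cases hle : Q.natDegree ≤ d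
      · exact ih Q hle hQm
      have hdeg : Q.natDegree = d + 1 := by omega
      have hQ0 : Q ≠ 0 := fun h => hle (by simp [h])
      have hm1 : d + 1 < m := by
        have hlt : Q.natDegree < m := (Polynomial.natDegree_lt_iff_degree_lt hQ0).mpr hQm
        omega
      set c := Q.coeff (d+1) with hc
      set R := Q - Polynomial.C c * S.P (d+1) t with hRdef
      have hmonic := S.monic (d+1) t ht
      have hPdeg := S.natDegree_eq (d+1) t ht
      have hRd : R.natDegree ≤ d := by
        rw [Polynomial.natDegree_le_iff_coeff_eq_zero]
        intro N hN
        rw [hRdef]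
        simp only [Polynomial.coeff_sub, Polynomial.coeff_C_mul]
        rcases eq_or_lt_of_le (Nat.succ_le_of_lt hN) with hcase | hcase
        · rw [← hcase]
          have h1 : (S.P (d+1) t).coeff (d+1) = 1 := by
            have := hmonic.leadingCoeff
            rwa [Polynomial.leadingCoeff, hPdeg] at this
          rw [h1, ← hc]
          ring
        · have z1 : Q.coeff N = 0 :=
            Polynomial.coeff_eq_zero_of_natDegree_lt (lt_of_le_of_lt (le_of_eq hdeg) hcase)
          have z2 : (S.P (d+1) t).coeff N = 0 :=
            Polynomial.coeff_eq_zero_of_natDegree_lt (by rw [hPdeg]; exact hcase)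
          rw [z1, z2]
          ring
      have hRm : R.degree < (m : ℕ) := by
        calc R.degree ≤ (R.natDegree : WithBot ℕ) := Polynomial.degree_le_natDegree
          _ < (m : ℕ) := by exact_mod_cast lt_of_le_of_lt hRd (by omega : d < m)
      have hsplit : Q = R + Polynomial.C c * S.P (d+1) t := by rw [hRdef]; ring
      rw [hsplit, split3 lam t hm]
      rw [ih R hRd hRm]
      have horth := S.orth (d+1) m t ht
      rw [if_neg (by omega : d + 1 ≠ m)] at horth
      rw [horth]
      ring

end algebra

section algebra2
variable (lam t : ℝ)

/-- `∫ Pₙ' Pₙ₋₁ w = n hₙ₋₁`. -/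
lemma deriv_integral (ht : 0 < t) (S : SingLaguerreOPS lam) (n : ℕ) (hn : 1 ≤ n) :
    ∫ x in Set.Ioi (0:ℝ),
      (S.P n t).derivative.eval x * (S.P (n-1) t).eval x * weight lam t x
      = (n : ℝ) * S.h (n-1) t := by
  have hm := fun k => S.moments k t ht
  set A := S.P n t with hA
  set B := S.P (n-1) t with hB
  set R := A.derivative - Polynomial.C (n : ℝ) * B with hRdef
  have hAdeg := S.natDegree_eq n t ht
  have hBdeg := S.natDegree_eq (n-1) t ht
  have hAmonic := S.monic n t ht
  have hBmonic := S.monic (n-1) t ht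
  rw [← hA] at hAdeg hAmonic
  rw [← hB] at hBdeg hBmonic
  have hRdeg : R.degree < ((n-1 : ℕ) : WithBot ℕ) := by
    rw [Polynomial.degree_lt_iff_coeff_zero]
    intro N hN
    have hN' : n - 1 ≤ N := by exact_mod_cast hN
    rw [hRdef]
    simp only [Polynomial.coeff_sub, Polynomial.coeff_C_mul, Polynomial.coeff_derivative]
    rcases eq_or_lt_of_le hN' with hcase | hcase
    · have hN1 : N + 1 = n := by omega
      have c1 : A.coeff (N+1) = 1 := by
        rw [hN1]
        have := hAmonic.leadingCoeff
        rwa [Polynomial.leadingCoeff, hAdeg] at this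
      have c2 : B.coeff N = 1 := by
        rw [← hcase]
        have := hBmonic.leadingCoeff
        rwa [Polynomial.leadingCoeff, hBdeg] at this
      rw [c1, c2]
      have : ((N : ℝ) + 1) = (n : ℝ) := by exact_mod_cast congrArg (Nat.cast : ℕ → ℝ) hN1
      rw [one_mul, mul_one, this, sub_self]
    · have z1 : A.coeff (N+1) = 0 :=
        Polynomial.coeff_eq_zero_of_natDegree_lt (by omega)
      have z2 : B.coeff N = 0 :=
        Polynomial.coeff_eq_zero_of_natDegree_lt (by omega)
      rw [z1, z2]
      ring
  have hsplit : A.derivative = R + Polynomial.C (n : ℝ) * B := by rw [hRdef]; ring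
  rw [hsplit, split3 lam t hm]
  rw [orth_lt lam t ht S (n-1) R.natDegree R le_rfl hRdeg]
  have horth := S.orth (n-1) (n-1) t ht
  rw [if_pos rfl] at horth
  rw [← hB] at horth
  rw [horth, zero_add]

/-- `∫ x Pₙ Pₙ₋₁ w = βₙ hₙ₋₁`. -/
lemma xint (ht : 0 < t) (S : SingLaguerreOPS lam) (n : ℕ) (hn : 1 ≤ n) :
    ∫ x in Set.Ioi (0:ℝ),
      x * (S.P n t).eval x * (S.P (n-1) t).eval x * weight lam t x
      = S.β n t * S.h (n-1) t := by
  have hm := fun k => S.moments k t ht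
  have hrec := S.recur n t ht
  rw [if_neg (by omega : n ≠ 0)] at hrec
  have e1 : ∫ x in Set.Ioi (0:ℝ),
      x * (S.P n t).eval x * (S.P (n-1) t).eval x * weight lam t x
      = ∫ x in Set.Ioi (0:ℝ),
        (Polynomial.X * S.P n t).eval x * (S.P (n-1) t).eval x * weight lam t x := by
    refine setIntegral_congr_fun measurableSet_Ioi fun x _ => ?_
    simp [mul_assoc]
  rw [e1, hrec]
  have e2 : S.P (n+1) t + Polynomial.C (S.α n t) * S.P n t + Polynomial.C (S.β n t) * S.P (n-1) t
      = (S.P (n+1) t + Polynomial.C (S.α n t) * S.P n t) + Polynomial.C (S.β n t) * S.P (n-1) t :=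
    rfl
  rw [e2, split3 lam t hm, split3 lam t hm]
  have o1 := S.orth (n+1) (n-1) t ht
  rw [if_neg (by omega : n + 1 ≠ n - 1)] at o1
  have o2 := S.orth n (n-1) t ht
  rw [if_neg (by omega : n ≠ n - 1)] at o2
  have o3 := S.orth (n-1) (n-1) t ht
  rw [if_pos rfl] at o3
  rw [o1, o2, o3]
  ring

end algebra2

theorem statement4 (lam t : ℝ) (hlam : 0 ≤ lam) (ht : 0 < t)
    (S : SingLaguerreOPS lam) (n : ℕ) (hn : 1 ≤ n) :
    lam / S.h (n-1) t *
        ∫ y in Set.Ioi (0:ℝ), (S.P n t).eval y * (S.P (n-1) t).eval y * weight lam t y / y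
      = -(n:ℝ) + 2 * S.β n t
        - t / S.h (n-1) t *
            ∫ y in Set.Ioi (0:ℝ),
              (S.P n t).eval y * (S.P (n-1) t).eval y * weight lam t y / y ^ 2 := by
  have hm := fun k => S.moments k t ht
  set A := S.P n t with hA
  set B := S.P (n-1) t with hB
  set Q := A * B with hQ
  have hibp := ibp_integral_eq_zero lam t hlam ht hm Q
  -- integrability of the four pieces
  have hg0 : IntegrableOn (fun x : ℝ => Q.derivative.eval x * weight lam t x) (Set.Ioi 0) := by
    refine (intOnQ lam t hm Q.derivative 0).congr_fun (fun x _ => ?_) measurableSet_Ioi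
    simp
  have hg1 : IntegrableOn (fun x : ℝ => A.eval x * B.eval x * weight lam t x / x)
      (Set.Ioi 0) := by
    refine (intOnQ lam t hm Q (-1)).congr_fun (fun x _ => ?_) measurableSet_Ioi
    simp only [hQ, Polynomial.eval_mul, zpow_neg, zpow_one, div_eq_mul_inv]
    ring
  have hgx : IntegrableOn (fun x : ℝ => x * A.eval x * B.eval x * weight lam t x)
      (Set.Ioi 0) := by
    refine (intOnQ lam t hm Q 1).congr_fun (fun x _ => ?_) measurableSet_Ioi
    simp only [hQ, Polynomial.eval_mul, zpow_one]
    ring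
  have hg2 : IntegrableOn (fun x : ℝ => A.eval x * B.eval x * weight lam t x / x ^ 2)
      (Set.Ioi 0) := by
    refine (intOnQ lam t hm Q (-2)).congr_fun (fun x _ => ?_) measurableSet_Ioi
    simp only [hQ, Polynomial.eval_mul, zpow_neg, zpow_ofNat, div_eq_mul_inv]
    ring
  -- split the IBP identity
  have he : Set.EqOn
      (fun x : ℝ =>
        (Q.derivative.eval x + Q.eval x * (lam / x - 2 * x + t / x ^ 2)) * weight lam t x)
      (fun x : ℝ => Q.derivative.eval x * weight lam t x
        + (lam * (A.eval x * B.eval x * weight lam t x / x)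
          + ((-2) * (x * A.eval x * B.eval x * weight lam t x)
            + t * (A.eval x * B.eval x * weight lam t x / x ^ 2)))) (Set.Ioi 0) := by
    intro x hx
    have hx0 : (x : ℝ) ≠ 0 := ne_of_gt hx
    simp only [hQ, Polynomial.eval_mul]
    field_simp
    ring
  rw [setIntegral_congr_fun measurableSet_Ioi he] at hibp
  have hc1 : IntegrableOn (fun x : ℝ => lam * (A.eval x * B.eval x * weight lam t x / x))
      (Set.Ioi 0) := hg1.const_mul lam
  have hcx : IntegrableOn (fun x : ℝ => (-2) * (x * A.eval x * B.eval x * weight lam t x))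
      (Set.Ioi 0) := hgx.const_mul (-2)
  have hc2 : IntegrableOn (fun x : ℝ => t * (A.eval x * B.eval x * weight lam t x / x ^ 2))
      (Set.Ioi 0) := hg2.const_mul t
  have hcx2 : IntegrableOn (fun x : ℝ => (-2) * (x * A.eval x * B.eval x * weight lam t x)
      + t * (A.eval x * B.eval x * weight lam t x / x ^ 2)) (Set.Ioi 0) := hcx.add hc2
  have hc123 : IntegrableOn (fun x : ℝ => lam * (A.eval x * B.eval x * weight lam t x / x)
      + ((-2) * (x * A.eval x * B.eval x * weight lam t x)
        + t * (A.eval x * B.eval x * weight lam t x / x ^ 2))) (Set.Ioi 0) := hc1.add hcx2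
  rw [integral_add hg0 hc123, integral_add hc1 hcx2, integral_add hcx hc2,
    integral_const_mul, integral_const_mul, integral_const_mul] at hibp
  -- compute the derivative integral
  have hd : Q.derivative = A.derivative * B + A * B.derivative := Polynomial.derivative_mul
  have hg0eq : ∫ x in Set.Ioi (0:ℝ), Q.derivative.eval x * weight lam t x
      = (∫ x in Set.Ioi (0:ℝ), A.derivative.eval x * B.eval x * weight lam t x)
        + ∫ x in Set.Ioi (0:ℝ), A.eval x * B.derivative.eval x * weight lam t x := by
    rw [← integral_add (intOn3 lam t hm A.derivative B) (intOn3 lam t hm A B.derivative)]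
    refine setIntegral_congr_fun measurableSet_Ioi fun x _ => ?_
    simp only [hd, Polynomial.eval_add, Polynomial.eval_mul]
    ring
  have hderiv1 : ∫ x in Set.Ioi (0:ℝ), A.derivative.eval x * B.eval x * weight lam t x
      = (n : ℝ) * S.h (n-1) t := deriv_integral lam t ht S n hn
  have hBne : B ≠ 0 := (by rw [hB]; exact (S.monic (n-1) t ht).ne_zero)
  have hBdeglt : B.derivative.degree < ((n : ℕ) : WithBot ℕ) := by
    have h1 : B.derivative.degree < B.degree := Polynomial.degree_derivative_lt hBne
    have h2 : B.degree = ((n - 1 : ℕ) : WithBot ℕ) := by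
      rw [Polynomial.degree_eq_natDegree hBne, hB, S.natDegree_eq (n-1) t ht]
    rw [h2] at h1
    refine lt_of_lt_of_le h1 ?_
    exact_mod_cast Nat.sub_le n 1
  have hderiv2 : ∫ x in Set.Ioi (0:ℝ), A.eval x * B.derivative.eval x * weight lam t x = 0 := by
    have hz := orth_lt lam t ht S n B.derivative.natDegree B.derivative le_rfl hBdeglt
    have hcongr : (∫ x in Set.Ioi (0:ℝ), A.eval x * B.derivative.eval x * weight lam t x)
        = ∫ x in Set.Ioi (0:ℝ), B.derivative.eval x * (S.P n t).eval x * weight lam t x := by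
      apply setIntegral_congr_fun measurableSet_Ioi
      intro x _
      rw [hA]
      ring
    rw [hcongr]
    exact hz
  have hxeq : ∫ x in Set.Ioi (0:ℝ), x * A.eval x * B.eval x * weight lam t x
      = S.β n t * S.h (n-1) t := xint lam t ht S n hn
  rw [hg0eq, hderiv1, hderiv2, hxeq] at hibp
  have hh : 0 < S.h (n-1) t := S.h_pos (n-1) t ht
  field_simp
  linarith [hibp]
end

section
/- For every integer n ≥ 0, the recurrence coefficients and auxiliary quantities satisfy r_{n+1}(t) + r_n(t) = t − α_n(t) R_n(t). -/
open MeasureTheory Real Filter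

/-!
Substituting the recurrence `y Pₙ = Pₙ₊₁ + αₙ Pₙ + βₙ Pₙ₋₁` into the integral defining `rₙ₊₁`,
the factor `y` cancels `y⁻¹` and orthogonality turns that term into `hₙ`, so
`rₙ₊₁ = t − αₙ Rₙ − (t βₙ / hₙ) ∫ y⁻¹ Pₙ Pₙ₋₁ w`. The classical identity `βₙ hₙ₋₁ = hₙ`
(compute `∫ y Pₙ₋₁ Pₙ w` with the recurrence applied to either factor) identifies the last
term with `rₙ`.
-/

open Polynomial Set

section WeightedIntegral

variable {w : ℝ → ℝ}

theorem integrableOn_eval_mul (hw : ∀ n : ℕ, IntegrableOn (fun x => x ^ n * w x) (Ioi 0))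
    (p : ℝ[X]) : IntegrableOn (fun x => p.eval x * w x) (Ioi 0) := by
  induction p using Polynomial.induction_on' with
  | add p q hp hq =>
    simp only [eval_add, add_mul]
    exact hp.add hq
  | monomial n a =>
    simp only [eval_monomial, mul_assoc]
    exact (hw n).const_mul a

variable (w) in
noncomputable def weightedIntegral
    (hw : ∀ n : ℕ, IntegrableOn (fun x => x ^ n * w x) (Ioi 0)) : ℝ[X] →ₗ[ℝ] ℝ where
  toFun p := ∫ x in Ioi 0, p.eval x * w x
  map_add' p q := by
    simp only [eval_add, add_mul]
    exact integral_add (integrableOn_eval_mul hw p) (integrableOn_eval_mul hw q)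
  map_smul' a p := by
    simp only [eval_smul, smul_eq_mul, mul_assoc, integral_const_mul, RingHom.id_apply]

theorem weightedIntegral_apply (hw : ∀ n : ℕ, IntegrableOn (fun x => x ^ n * w x) (Ioi 0))
    (p : ℝ[X]) : weightedIntegral w hw p = ∫ x in Ioi 0, p.eval x * w x :=
  rfl

theorem weightedIntegral_div_X_mul (hw : ∀ n : ℕ, IntegrableOn (fun x => x ^ n * w x) (Ioi 0))
    (hw' : ∀ n : ℕ, IntegrableOn (fun x => x ^ n * (w x / x)) (Ioi 0)) (p : ℝ[X]) :
    weightedIntegral (fun x => w x / x) hw' (X * p) = weightedIntegral w hw p := by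
  refine setIntegral_congr_fun measurableSet_Ioi fun x (hx : 0 < x) => ?_
  simp only [eval_mul, eval_X]
  field_simp

end WeightedIntegral

section ThreeTermRecurrence

def ThreeTermRecurrence (P : ℕ → ℝ[X]) (α β : ℕ → ℝ) : Prop :=
  ∀ n, X * P n = P (n + 1) + C (α n) * P n + C (β n) * (if n = 0 then 0 else P (n - 1))

variable {P : ℕ → ℝ[X]} {α β : ℕ → ℝ}

theorem ThreeTermRecurrence.X_mul_succ (recur : ThreeTermRecurrence P α β) (n : ℕ) :
    X * P (n + 1) = P (n + 2) + C (α (n + 1)) * P (n + 1) + C (β (n + 1)) * P n := by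
  simpa using recur (n + 1)

theorem ThreeTermRecurrence.beta_succ_mul (recur : ThreeTermRecurrence P α β)
    (L : ℝ[X] →ₗ[ℝ] ℝ) {h : ℕ → ℝ}
    (orth : ∀ m n, L (P m * P n) = if m = n then h n else 0) (m : ℕ) :
    β (m + 1) * h m = h (m + 1) := by
  have expand_left : L (X * P m * P (m + 1)) = h (m + 1) := by
    rw [recur m]
    split_ifs <;> simp [add_mul, C_mul', orth]
  have expand_right : L (P m * (X * P (m + 1))) = β (m + 1) * h m := by
    simp [recur.X_mul_succ, mul_add, C_mul', orth]
  rw [← expand_left, ← expand_right, mul_left_comm, mul_assoc]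

theorem ThreeTermRecurrence.map_succ_mul (recur : ThreeTermRecurrence P α β)
    (L L' : ℝ[X] →ₗ[ℝ] ℝ) (hL : ∀ p, L (X * p) = L' p) (n : ℕ) :
    L (P (n + 1) * P n) = L' (P n * P n) - α n * L (P n * P n)
      - β n * L ((if n = 0 then 0 else P (n - 1)) * P n) := by
  have hP : P (n + 1) = X * P n - C (α n) * P n - C (β n) * (if n = 0 then 0 else P (n - 1)) := by
    rw [recur n]; ring
  rw [hP, ← hL]
  simp only [sub_mul, mul_assoc, C_mul', smul_mul_assoc, map_sub, map_smul, smul_eq_mul]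

end ThreeTermRecurrence

namespace SingLaguerreOPS

variable {lam t : ℝ}

theorem integrableOn_pow_mul_weight (S : SingLaguerreOPS lam) (ht : 0 < t) (n : ℕ) :
    IntegrableOn (fun x => x ^ n * weight lam t x) (Ioi 0) := by
  simpa only [zpow_natCast] using S.moments n t ht

theorem integrableOn_pow_mul_weight_div (S : SingLaguerreOPS lam) (ht : 0 < t) (n : ℕ) :
    IntegrableOn (fun x => x ^ n * (weight lam t x / x)) (Ioi 0) := by
  refine (S.moments (n - 1) t ht).congr_fun (fun x (hx : 0 < x) => ?_) measurableSet_Ioi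
  dsimp only
  rw [zpow_sub_one₀ hx.ne', zpow_natCast]
  ring

theorem threeTermRecurrence (S : SingLaguerreOPS lam) (ht : 0 < t) :
    ThreeTermRecurrence (S.P · t) (S.α · t) (S.β · t) :=
  (S.recur · t ht)

noncomputable def functional (S : SingLaguerreOPS lam) (ht : 0 < t) : ℝ[X] →ₗ[ℝ] ℝ :=
  weightedIntegral (weight lam t) (S.integrableOn_pow_mul_weight ht)

noncomputable def functionalDivX (S : SingLaguerreOPS lam) (ht : 0 < t) : ℝ[X] →ₗ[ℝ] ℝ :=
  weightedIntegral (fun x => weight lam t x / x) (S.integrableOn_pow_mul_weight_div ht)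

theorem functionalDivX_X_mul (S : SingLaguerreOPS lam) (ht : 0 < t) (p : ℝ[X]) :
    S.functionalDivX ht (X * p) = S.functional ht p :=
  weightedIntegral_div_X_mul _ _ p

theorem functional_P_mul_P (S : SingLaguerreOPS lam) (ht : 0 < t) (m n : ℕ) :
    S.functional ht (S.P m t * S.P n t) = if m = n then S.h n t else 0 := by
  simpa only [functional, weightedIntegral_apply, eval_mul] using S.orth m n t ht

theorem beta_succ_mul_h (S : SingLaguerreOPS lam) (ht : 0 < t) (m : ℕ) :
    S.β (m + 1) t * S.h m t = S.h (m + 1) t :=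
  (S.threeTermRecurrence ht).beta_succ_mul _ (S.functional_P_mul_P ht) m

end SingLaguerreOPS

theorem Rn_eq_functionalDivX (lam t : ℝ) (ht : 0 < t) (S : SingLaguerreOPS lam) (n : ℕ) :
    Rn lam S n t = t / S.h n t * S.functionalDivX ht (S.P n t * S.P n t) := by
  simp only [Rn, SingLaguerreOPS.functionalDivX, weightedIntegral_apply, eval_mul, sq,
    mul_div_assoc]

theorem rn_eq_functionalDivX (lam t : ℝ) (ht : 0 < t) (S : SingLaguerreOPS lam) (n : ℕ) :
    rn lam S n t = t / S.h (n - 1) t *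
      S.functionalDivX ht ((if n = 0 then 0 else S.P (n - 1) t) * S.P n t) := by
  simp only [rn, SingLaguerreOPS.functionalDivX, weightedIntegral_apply, eval_mul,
    apply_ite (eval _), eval_zero, mul_div_assoc, mul_comm (eval _ (S.P n t))]

theorem statement5_general (lam t : ℝ) (ht : 0 < t)
    (S : SingLaguerreOPS lam) (n : ℕ) :
    rn lam S (n+1) t + rn lam S n t = t - S.α n t * Rn lam S n t := by
  have hsplit := (S.threeTermRecurrence ht).map_succ_mul _ _ (S.functionalDivX_X_mul ht) n
  rw [S.functional_P_mul_P ht, if_pos rfl] at hsplit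
  rw [rn_eq_functionalDivX lam t ht, rn_eq_functionalDivX lam t ht, Rn_eq_functionalDivX lam t ht]
  simp only [Nat.add_sub_cancel, Nat.add_one_ne_zero, if_false]
  rw [mul_comm (S.P n t), hsplit]
  have hh := (S.h_pos n t ht).ne'
  cases n with
  | zero =>
    simp only [↓reduceIte, zero_mul, map_zero]
    field_simp
    ring
  | succ m =>
    rw [← S.beta_succ_mul_h ht m] at hh ⊢
    simp only [Nat.add_sub_cancel, Nat.add_one_ne_zero, if_false]
    field_simp [left_ne_zero_of_mul hh, right_ne_zero_of_mul hh]
    ring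

theorem statement5 (lam t : ℝ) (hlam : 0 ≤ lam) (ht : 0 < t)
    (S : SingLaguerreOPS lam) (n : ℕ) :
    rn lam S (n+1) t + rn lam S n t = t - S.α n t * Rn lam S n t :=
  statement5_general lam t ht S n
end

section
/- For every integer n ≥ 1, the recurrence coefficients and auxiliary quantities satisfy (4β_n(t) − 2n − λ) r_n(t) + n t = 2β_n(t)·(t + α_n(t) R_{n−1}(t) + α_{n−1}(t) R_n(t)). -/
open MeasureTheory Real Filter

namespace SLaux

/-- weighted Laurent moment of a polynomial -/
noncomputable def Jp (lam t : ℝ) (p : Polynomial ℝ) (k : ℤ) : ℝ :=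
  ∫ y in Set.Ioi (0:ℝ), p.eval y * weight lam t y * y ^ k

variable {lam t : ℝ}

theorem weight_pos (hx : (0:ℝ) < x) : 0 < weight lam t x :=
  mul_pos (Real.rpow_pos_of_pos hx lam) (Real.exp_pos _)

theorem jp_integrable (S : SingLaguerreOPS lam) (ht : 0 < t) (p : Polynomial ℝ) (k : ℤ) :
    IntegrableOn (fun y : ℝ => p.eval y * weight lam t y * y ^ k) (Set.Ioi (0:ℝ)) := by
  induction p using Polynomial.induction_on' with
  | add p q hp hq =>
      exact IntegrableOn.congr_fun (hp.add hq)
        (fun x hx => by simp [Polynomial.eval_add]; ring) measurableSet_Ioi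
  | monomial n a =>
      refine IntegrableOn.congr_fun ((S.moments (n + k) t ht).const_mul a)
        (fun x hx => ?_) measurableSet_Ioi
      have hx0 : (x:ℝ) ≠ 0 := ne_of_gt (Set.mem_Ioi.mp hx)
      simp only [Polynomial.eval_monomial]
      rw [zpow_add₀ hx0, zpow_natCast]
      ring

theorem jp_add (S : SingLaguerreOPS lam) (ht : 0 < t) (p q : Polynomial ℝ) (k : ℤ) :
    Jp lam t (p + q) k = Jp lam t p k + Jp lam t q k := by
  unfold Jp
  rw [← integral_add (jp_integrable S ht p k) (jp_integrable S ht q k)]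
  congr 1; funext y; simp [Polynomial.eval_add]; ring

theorem jp_Cmul (a : ℝ) (p : Polynomial ℝ) (k : ℤ) :
    Jp lam t (Polynomial.C a * p) k = a * Jp lam t p k := by
  unfold Jp
  rw [← integral_const_mul]
  congr 1; funext y; simp; ring

theorem jp_zero (k : ℤ) : Jp lam t 0 k = 0 := by
  unfold Jp; simp

theorem jp_Xmul (p : Polynomial ℝ) (k : ℤ) :
    Jp lam t (Polynomial.X * p) k = Jp lam t p (k + 1) := by
  unfold Jp
  refine setIntegral_congr_fun measurableSet_Ioi (fun x hx => ?_)
  have hx0 : (x:ℝ) ≠ 0 := ne_of_gt hx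
  simp only [Polynomial.eval_mul, Polynomial.eval_X]
  rw [zpow_add₀ hx0, zpow_one]
  ring

theorem jp_sub (S : SingLaguerreOPS lam) (ht : 0 < t) (p q : Polynomial ℝ) (k : ℤ) :
    Jp lam t (p - q) k = Jp lam t p k - Jp lam t q k := by
  have := jp_add S ht (p - q) q k
  rw [sub_add_cancel] at this
  linarith


theorem jp_orth (S : SingLaguerreOPS lam) (ht : 0 < t) (m n : ℕ) :
    Jp lam t (S.P m t * S.P n t) 0 = if m = n then S.h n t else 0 := by
  rw [← S.orth m n t ht]
  refine setIntegral_congr_fun measurableSet_Ioi (fun x _ => ?_)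
  simp [Polynomial.eval_mul]

theorem jp_lt_aux (S : SingLaguerreOPS lam) (ht : 0 < t) (n : ℕ) :
    ∀ (k : ℕ) (q : Polynomial ℝ), q.natDegree ≤ k → q.degree < (n : ℕ) →
      Jp lam t (q * S.P n t) 0 = 0 := by
  intro k
  induction k with
  | zero =>
      intro q hk hdeg
      rcases eq_or_ne q 0 with rfl | hq0
      · rw [zero_mul, jp_zero]
      have hn0 : n ≠ 0 := by
        intro h; subst h
        rw [← Polynomial.natDegree_lt_iff_degree_lt hq0] at hdeg
        omega
      rw [Polynomial.eq_C_of_natDegree_le_zero hk]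
      have h1 : Polynomial.C (q.coeff 0) * S.P n t
          = Polynomial.C (q.coeff 0) * (S.P 0 t * S.P n t) := by
        rw [S.P_zero t ht, one_mul]
      rw [h1, jp_Cmul, jp_orth S ht, if_neg (fun h => hn0 h.symm), mul_zero]
  | succ k ih =>
      intro q hk hdeg
      rcases eq_or_ne q 0 with rfl | hq0
      · rw [zero_mul, jp_zero]
      set d := q.natDegree with hd
      have hdn : d < n := by rwa [← Polynomial.natDegree_lt_iff_degree_lt hq0] at hdeg
      have hPd : (S.P d t).degree = (d : ℕ) := by
        rw [Polynomial.degree_eq_natDegree (S.monic d t ht).ne_zero, S.natDegree_eq d t ht]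
      have hlc : q.leadingCoeff ≠ 0 := Polynomial.leadingCoeff_ne_zero.mpr hq0
      set q' := q - Polynomial.C q.leadingCoeff * S.P d t with hq'
      have hdegC : (Polynomial.C q.leadingCoeff * S.P d t).degree = q.degree := by
        rw [Polynomial.degree_C_mul hlc, hPd,
          Polynomial.degree_eq_natDegree hq0]
      have hdlt : q'.degree < q.degree := by
        refine Polynomial.degree_sub_lt hdegC.symm hq0 ?_
        rw [Polynomial.leadingCoeff_mul, Polynomial.leadingCoeff_C,
          (S.monic d t ht).leadingCoeff, mul_one]
      have hsplit : q * S.P n t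
          = q' * S.P n t + Polynomial.C q.leadingCoeff * (S.P d t * S.P n t) := by
        rw [hq']; ring
      rw [hsplit, jp_add S ht, jp_Cmul, jp_orth S ht, if_neg (Nat.ne_of_lt hdn), mul_zero,
        add_zero]
      rcases eq_or_ne q' 0 with h0 | hq'0
      · rw [h0, zero_mul, jp_zero]
      · refine ih q' ?_ (lt_trans hdlt hdeg)
        have := Polynomial.natDegree_lt_natDegree hq'0 hdlt
        omega

theorem jp_lt (S : SingLaguerreOPS lam) (ht : 0 < t) {n : ℕ} {q : Polynomial ℝ}
    (hdeg : q.degree < (n : ℕ)) : Jp lam t (q * S.P n t) 0 = 0 :=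
  jp_lt_aux S ht n q.natDegree q le_rfl hdeg

theorem jp_coeff (S : SingLaguerreOPS lam) (ht : 0 < t) {n : ℕ} {q : Polynomial ℝ}
    (hdeg : q.degree < ((n + 1 : ℕ) : ℕ)) :
    Jp lam t (q * S.P n t) 0 = q.coeff n * S.h n t := by
  set q' := q - Polynomial.C (q.coeff n) * S.P n t with hq'
  have hq'deg : q'.degree < (n : ℕ) := by
    rw [Polynomial.degree_lt_iff_coeff_zero]
    intro m hm
    rcases eq_or_lt_of_le hm with h | h
    · rw [hq', Polynomial.coeff_sub, Polynomial.coeff_C_mul, ← h]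
      have : (S.P n t).coeff n = 1 := by
        have := (S.monic n t ht).coeff_natDegree
        rwa [S.natDegree_eq n t ht] at this
      rw [this, mul_one, sub_self]
    · have h1 : q.coeff m = 0 := by
        apply Polynomial.coeff_eq_zero_of_degree_lt
        refine lt_of_lt_of_le hdeg ?_
        exact_mod_cast Nat.cast_le.mpr h
      have h2 : (S.P n t).coeff m = 0 := by
        apply Polynomial.coeff_eq_zero_of_natDegree_lt
        rw [S.natDegree_eq n t ht]; exact h
      rw [hq', Polynomial.coeff_sub, Polynomial.coeff_C_mul, h1, h2, mul_zero, sub_self]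
  have hsplit : q * S.P n t
      = q' * S.P n t + Polynomial.C (q.coeff n) * (S.P n t * S.P n t) := by
    rw [hq']; ring
  rw [hsplit, jp_add S ht, jp_Cmul, jp_orth S ht, if_pos rfl, jp_lt S ht hq'deg, zero_add]

/-- the `if`-protected predecessor polynomial -/
noncomputable def Pi (S : SingLaguerreOPS lam) (t : ℝ) (n : ℕ) : Polynomial ℝ :=
  if n = 0 then 0 else S.P (n-1) t

theorem recurJ (S : SingLaguerreOPS lam) (ht : 0 < t) (n : ℕ) :
    Polynomial.X * S.P n t
      = S.P (n+1) t + Polynomial.C (S.α n t) * S.P n t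
        + Polynomial.C (S.β n t) * Pi S t n := S.recur n t ht

theorem jp_mul_Pi_self (S : SingLaguerreOPS lam) (ht : 0 < t) (n m : ℕ) (hnm : m ≠ n - 1 ∨ n = 0) :
    Jp lam t (S.P m t * Pi S t n) 0 = 0 := by
  unfold Pi
  rcases eq_or_ne n 0 with rfl | hn0
  · rw [if_pos rfl, mul_zero, jp_zero]
  · rw [if_neg hn0, jp_orth S ht]
    rcases hnm with h | h
    · rw [if_neg h]
    · exact absurd h hn0

theorem h_succ (S : SingLaguerreOPS lam) (ht : 0 < t) (n : ℕ) :
    S.h (n+1) t = S.β (n+1) t * S.h n t := by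
  have e3 : S.P (n+1) t * (Polynomial.X * S.P n t)
      = S.P n t * (Polynomial.X * S.P (n+1) t) := by ring
  have e1 : Jp lam t (S.P (n+1) t * (Polynomial.X * S.P n t)) 0 = S.h (n+1) t := by
    have hdecomp : S.P (n+1) t * (Polynomial.X * S.P n t)
        = S.P (n+1) t * S.P (n+1) t + Polynomial.C (S.α n t) * (S.P (n+1) t * S.P n t)
          + Polynomial.C (S.β n t) * (S.P (n+1) t * Pi S t n) := by
      rw [recurJ S ht n]; ring
    rw [hdecomp, jp_add S ht, jp_add S ht, jp_Cmul, jp_Cmul, jp_orth S ht, jp_orth S ht,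
      if_pos rfl, if_neg (by omega), jp_mul_Pi_self S ht n (n+1) (by omega)]
    ring
  have e2 : Jp lam t (S.P n t * (Polynomial.X * S.P (n+1) t)) 0
      = S.β (n+1) t * S.h n t := by
    have hPi : Pi S t (n+1) = S.P n t := by
      unfold Pi; simp
    have hdecomp : S.P n t * (Polynomial.X * S.P (n+1) t)
        = S.P n t * S.P (n+2) t + Polynomial.C (S.α (n+1) t) * (S.P n t * S.P (n+1) t)
          + Polynomial.C (S.β (n+1) t) * (S.P n t * S.P n t) := by
      rw [recurJ S ht (n+1), hPi]; ring
    rw [hdecomp, jp_add S ht, jp_add S ht, jp_Cmul, jp_Cmul, jp_orth S ht, jp_orth S ht,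
      jp_orth S ht, if_neg (by omega), if_neg (by omega), if_pos rfl]
    ring
  rw [← e1, e3, e2]

theorem jp_sq_neg_one_pos (S : SingLaguerreOPS lam) (hlam : 0 ≤ lam) (ht : 0 < t) (n : ℕ) :
    0 < Jp lam t (S.P n t * S.P n t) (-1) := by
  unfold Jp
  rw [setIntegral_pos_iff_support_of_nonneg_ae]
  · have hfin : {x : ℝ | (S.P n t).IsRoot x}.Finite :=
      Polynomial.finite_setOf_isRoot (S.monic n t ht).ne_zero
    have hsub : Set.Ioi (0:ℝ) \ {x : ℝ | (S.P n t).IsRoot x}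
        ⊆ (Function.support fun y : ℝ =>
            Polynomial.eval y (S.P n t * S.P n t) * weight lam t y * y ^ (-1:ℤ)) ∩
          Set.Ioi (0:ℝ) := by
      rintro x ⟨hx1, hx2⟩
      refine ⟨?_, hx1⟩
      have hx0 : (0:ℝ) < x := hx1
      have hev : Polynomial.eval x (S.P n t * S.P n t) ≠ 0 := by
        rw [Polynomial.eval_mul]
        exact mul_ne_zero hx2 hx2
      exact mul_ne_zero (mul_ne_zero hev (ne_of_gt (weight_pos hx0)))
        (zpow_ne_zero _ (ne_of_gt hx0))
    refine lt_of_lt_of_le ?_ (measure_mono hsub)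
    have : volume (Set.Ioi (0:ℝ) \ {x : ℝ | (S.P n t).IsRoot x}) = volume (Set.Ioi (0:ℝ)) := by
      exact measure_diff_null (hfin.measure_zero volume)
    rw [this, Real.volume_Ioi]
    exact ENNReal.zero_lt_top
  · refine (ae_restrict_iff' measurableSet_Ioi).mpr (ae_of_all _ (fun x hx => ?_))
    have hx0 : (0:ℝ) < x := hx
    simp only [Pi.zero_apply, Polynomial.eval_mul]
    have h1 : (0:ℝ) < weight lam t x := weight_pos hx0
    have h2 : (0:ℝ) < x ^ (-1:ℤ) := zpow_pos hx0 _
    have h3 : (0:ℝ) ≤ Polynomial.eval x (S.P n t) * Polynomial.eval x (S.P n t) :=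
      mul_self_nonneg _
    positivity
  · exact jp_integrable S ht _ _

theorem beta_pos (S : SingLaguerreOPS lam) (ht : 0 < t) (n : ℕ) : 0 < S.β (n+1) t := by
  have h1 := h_succ S ht n
  have h2 := S.h_pos (n+1) t ht
  have h3 := S.h_pos n t ht
  nlinarith


theorem ibp (S : SingLaguerreOPS lam) (hlam : 0 ≤ lam) (ht : 0 < t) (f : Polynomial ℝ) :
    Jp lam t (Polynomial.derivative f) 0 + lam * Jp lam t f (-1) + t * Jp lam t f (-2)
      - 2 * Jp lam t (Polynomial.X * f) 0 = 0 := by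
  set g : ℝ → ℝ := fun x =>
    ((Polynomial.derivative f).eval x + f.eval x * (lam / x - 2*x + t / x^2))
      * weight lam t x with hg
  set F : ℝ → ℝ := fun x => if x ≤ 0 then 0 else f.eval x * weight lam t x with hF
  have h1 := jp_integrable S ht (Polynomial.derivative f) 0
  have h2 := (jp_integrable S ht f (-1)).const_mul lam
  have h3 := (jp_integrable S ht f (-2)).const_mul t
  have h4 := (jp_integrable S ht (Polynomial.X * f) 0).const_mul (-2)
  have hsum : ∀ x ∈ Set.Ioi (0:ℝ),
      (Polynomial.derivative f).eval x * weight lam t x * x ^ (0:ℤ)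
        + lam * (f.eval x * weight lam t x * x ^ (-1:ℤ))
        + t * (f.eval x * weight lam t x * x ^ (-2:ℤ))
        + (-2) * ((Polynomial.X * f).eval x * weight lam t x * x ^ (0:ℤ)) = g x := by
    intro x hx
    have hx0 : (x:ℝ) ≠ 0 := ne_of_gt hx
    have e1 : (x:ℝ) ^ (-1:ℤ) = x⁻¹ := zpow_neg_one x
    have e2 : (x:ℝ) ^ (-2:ℤ) = (x^2)⁻¹ := by
      rw [show (-2:ℤ) = -(2:ℕ) by norm_num, zpow_neg, zpow_natCast]
    simp only [hg, zpow_zero, e1, e2, Polynomial.eval_mul, Polynomial.eval_X]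
    field_simp
    ring
  have hgint : IntegrableOn g (Set.Ioi (0:ℝ)) := by
    refine IntegrableOn.congr_fun (((h1.add h2).add h3).add h4) hsum measurableSet_Ioi
  have hderiv : ∀ x ∈ Set.Ioi (0:ℝ), HasDerivAt F (g x) x := by
    intro x hx
    have hx0 : (0:ℝ) < x := hx
    have hxne : (x:ℝ) ≠ 0 := ne_of_gt hx0
    have hFf : F =ᶠ[nhds x] fun y => f.eval y * weight lam t y := by
      filter_upwards [isOpen_Ioi.mem_nhds hx] with y hy
      simp [hF, not_le.mpr (Set.mem_Ioi.mp hy)]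
    rw [Filter.EventuallyEq.hasDerivAt_iff hFf]
    have hp : HasDerivAt (fun y : ℝ => f.eval y) ((Polynomial.derivative f).eval x) x :=
      f.hasDerivAt x
    have hu : HasDerivAt (fun y : ℝ => -y^2 - t/y) (-(2*x) - t * -(x^2)⁻¹) x := by
      have ha : HasDerivAt (fun y : ℝ => y^2) (2*x) x := by
        simpa using hasDerivAt_pow 2 x
      have hb : HasDerivAt (fun y : ℝ => t/y) (t * -(x^2)⁻¹) x := by
        have := (hasDerivAt_inv hxne).const_mul t
        simpa [div_eq_mul_inv] using this
      exact ha.neg.sub hb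
    have hexp : HasDerivAt (fun y : ℝ => Real.exp (-y^2 - t/y))
        (Real.exp (-x^2 - t/x) * (-(2*x) - t * -(x^2)⁻¹)) x := hu.exp
    have hrpow : HasDerivAt (fun y : ℝ => y ^ lam) (lam * x ^ (lam - 1)) x :=
      Real.hasDerivAt_rpow_const (Or.inl hxne)
    have hw : HasDerivAt (weight lam t)
        (lam * x ^ (lam - 1) * Real.exp (-x^2 - t/x)
          + x ^ lam * (Real.exp (-x^2 - t/x) * (-(2*x) - t * -(x^2)⁻¹))) x := by
      exact hrpow.mul hexp
    have := hp.mul hw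
    refine this.congr_deriv (Eq.symm ?_)
    have hxl : x ^ (lam - 1) = x ^ lam / x := by
      rw [Real.rpow_sub hx0, Real.rpow_one]
    rw [hg]
    show ((Polynomial.derivative f).eval x + f.eval x * (lam / x - 2*x + t / x^2))
        * weight lam t x = _
    unfold weight
    rw [hxl]
    field_simp
    ring
  have hcont : ContinuousWithinAt F (Set.Ici (0:ℝ)) 0 := by
    rw [← continuousWithinAt_Ioi_iff_Ici]
    have hF0 : F 0 = 0 := by simp [hF]
    unfold ContinuousWithinAt
    rw [hF0]
    obtain ⟨C, hC⟩ := (isCompact_Icc (a := (0:ℝ)) (b := 1)).exists_bound_of_continuousOn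
      (f.continuousOn_aeval.norm)
    have hC0 : 0 ≤ C := le_trans (norm_nonneg _) (hC 0 (by norm_num))
    have hbound : Tendsto (fun x : ℝ => C * Real.exp (-(t / x))) (nhdsWithin 0 (Set.Ioi 0))
        (nhds 0) := by
      have hdiv : Tendsto (fun x : ℝ => t / x) (nhdsWithin 0 (Set.Ioi 0)) atTop := by
        simpa [div_eq_mul_inv] using tendsto_inv_nhdsGT_zero.const_mul_atTop ht
      have : Tendsto (fun x : ℝ => Real.exp (-(t / x))) (nhdsWithin 0 (Set.Ioi 0)) (nhds 0) :=
        Real.tendsto_exp_atBot.comp (tendsto_neg_atBot_iff.mpr hdiv)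
      simpa using this.const_mul C
    refine squeeze_zero_norm' ?_ hbound
    filter_upwards [Ioo_mem_nhdsGT_of_mem (Set.left_mem_Ico.mpr zero_lt_one)] with x hx
    obtain ⟨hx0, hx1⟩ := hx
    have hw : weight lam t x ≤ Real.exp (-(t / x)) := by
      unfold weight
      have hr : x ^ lam ≤ 1 := Real.rpow_le_one (le_of_lt hx0) (le_of_lt hx1) hlam
      have he : Real.exp (-x^2 - t/x) ≤ Real.exp (-(t/x)) := by
        apply Real.exp_le_exp.mpr
        nlinarith
      calc x ^ lam * Real.exp (-x^2 - t/x) ≤ 1 * Real.exp (-x^2 - t/x) := by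
            apply mul_le_mul_of_nonneg_right hr (le_of_lt (Real.exp_pos _))
        _ ≤ Real.exp (-(t/x)) := by rw [one_mul]; exact he
    have hFx : F x = f.eval x * weight lam t x := by simp [hF, not_le.mpr hx0]
    rw [hFx]
    have heval : ‖f.eval x‖ ≤ C := by
      have := hC x ⟨le_of_lt hx0, le_of_lt hx1⟩
      simpa using this
    have hwpos : 0 < weight lam t x := weight_pos hx0
    calc ‖f.eval x * weight lam t x‖ = ‖f.eval x‖ * weight lam t x := by
          rw [norm_mul]; congr 1; exact abs_of_pos hwpos
      _ ≤ C * Real.exp (-(t / x)) := by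
          apply mul_le_mul heval hw (le_of_lt hwpos) hC0
  have htop : Tendsto F atTop (nhds 0) := by
    set k := ⌈lam⌉₊ with hk
    set q := f * Polynomial.X ^ k with hq
    have hqten : Tendsto (fun x : ℝ => ‖q.eval x / Real.exp x‖) atTop (nhds 0) := by
      have := (q.tendsto_div_exp_atTop).norm
      simpa using this
    refine squeeze_zero_norm' ?_ hqten
    filter_upwards [eventually_ge_atTop (1:ℝ)] with x hx1
    have hx0 : (0:ℝ) < x := lt_of_lt_of_le zero_lt_one hx1
    have hFx : F x = f.eval x * weight lam t x := by simp [hF, not_le.mpr hx0]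
    have hrp : x ^ lam ≤ x ^ (k:ℕ) := by
      calc x ^ lam ≤ x ^ (k:ℝ) :=
            Real.rpow_le_rpow_of_exponent_le hx1 (Nat.le_ceil lam)
        _ = x ^ (k:ℕ) := Real.rpow_natCast x k
    have hexp : Real.exp (-x^2 - t/x) ≤ Real.exp (-x) := by
      apply Real.exp_le_exp.mpr
      have h1 : x ≤ x^2 := by nlinarith
      have h2 : 0 < t / x := div_pos ht hx0
      nlinarith
    have hwle : weight lam t x ≤ x ^ (k:ℕ) * Real.exp (-x) := by
      unfold weight
      have h0 : (0:ℝ) ≤ x ^ (k:ℕ) := pow_nonneg (le_of_lt hx0) k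
      calc x ^ lam * Real.exp (-x^2 - t/x) ≤ x ^ (k:ℕ) * Real.exp (-x^2 - t/x) :=
            mul_le_mul_of_nonneg_right hrp (le_of_lt (Real.exp_pos _))
        _ ≤ x ^ (k:ℕ) * Real.exp (-x) := mul_le_mul_of_nonneg_left hexp h0
    rw [hFx]
    have : ‖f.eval x * weight lam t x‖ ≤ ‖f.eval x‖ * (x ^ (k:ℕ) * Real.exp (-x)) := by
      rw [norm_mul]
      apply mul_le_mul_of_nonneg_left ?_ (norm_nonneg _)
      calc ‖weight lam t x‖ = weight lam t x := abs_of_pos (weight_pos hx0)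
        _ ≤ x ^ (k:ℕ) * Real.exp (-x) := hwle
    refine le_trans this (le_of_eq ?_)
    rw [hq, norm_div, Polynomial.eval_mul, Polynomial.eval_pow, Polynomial.eval_X, norm_mul,
      Real.norm_eq_abs (Real.exp x), abs_of_pos (Real.exp_pos x),
      Real.norm_eq_abs (x ^ k), abs_of_pos (pow_pos hx0 k), Real.exp_neg, div_eq_mul_inv]
    ring
  have hFTC := integral_Ioi_of_hasDerivAt_of_tendsto hcont hderiv hgint htop
  have hF0 : F 0 = 0 := by simp [hF]
  rw [hF0, sub_zero] at hFTC
  have hsplit : ∫ x in Set.Ioi (0:ℝ), g x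
      = Jp lam t (Polynomial.derivative f) 0 + lam * Jp lam t f (-1) + t * Jp lam t f (-2)
        + (-2) * Jp lam t (Polynomial.X * f) 0 := by
    rw [← setIntegral_congr_fun measurableSet_Ioi hsum]
    have h12 : Integrable (fun x : ℝ =>
        (Polynomial.derivative f).eval x * weight lam t x * x ^ (0:ℤ)
          + lam * (f.eval x * weight lam t x * x ^ (-1:ℤ)))
        (volume.restrict (Set.Ioi (0:ℝ))) := h1.add h2
    have h123 : Integrable (fun x : ℝ =>
        (Polynomial.derivative f).eval x * weight lam t x * x ^ (0:ℤ)
          + lam * (f.eval x * weight lam t x * x ^ (-1:ℤ))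
          + t * (f.eval x * weight lam t x * x ^ (-2:ℤ)))
        (volume.restrict (Set.Ioi (0:ℝ))) := h12.add h3
    rw [integral_add h123 h4, integral_add h12 h3, integral_add h1 h2]
    unfold Jp
    rw [integral_const_mul, integral_const_mul, integral_const_mul]
  rw [hFTC] at hsplit
  linarith


theorem jp_comm (p q : Polynomial ℝ) (k : ℤ) :
    Jp lam t (p * q) k = Jp lam t (q * p) k := by rw [mul_comm]

theorem jp_deriv_lt (S : SingLaguerreOPS lam) (ht : 0 < t) {n m : ℕ} (h : n ≤ m) :
    Jp lam t (Polynomial.derivative (S.P n t) * S.P m t) 0 = 0 := by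
  apply jp_lt S ht
  calc (Polynomial.derivative (S.P n t)).degree < (S.P n t).degree :=
        Polynomial.degree_derivative_lt (S.monic n t ht).ne_zero
    _ ≤ (m : ℕ) := by
        rw [Polynomial.degree_eq_natDegree (S.monic n t ht).ne_zero, S.natDegree_eq n t ht]
        exact_mod_cast Nat.cast_le.mpr h

theorem jp_deriv_succ (S : SingLaguerreOPS lam) (ht : 0 < t) (n : ℕ) :
    Jp lam t (Polynomial.derivative (S.P (n+1) t) * S.P n t) 0 = (n+1) * S.h n t := by
  have hdeg : (Polynomial.derivative (S.P (n+1) t)).degree < ((n+1:ℕ) : ℕ) := by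
    calc (Polynomial.derivative (S.P (n+1) t)).degree < (S.P (n+1) t).degree :=
          Polynomial.degree_derivative_lt (S.monic (n+1) t ht).ne_zero
      _ = ((n+1:ℕ) : ℕ) := by
          rw [Polynomial.degree_eq_natDegree (S.monic (n+1) t ht).ne_zero,
            S.natDegree_eq (n+1) t ht]
  rw [jp_coeff S ht hdeg]
  congr 1
  rw [Polynomial.coeff_derivative]
  have : (S.P (n+1) t).coeff (n+1) = 1 := by
    have := (S.monic (n+1) t ht).coeff_natDegree
    rwa [S.natDegree_eq (n+1) t ht] at this
  rw [this]
  push_cast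
  ring

theorem jp_deriv_skip (S : SingLaguerreOPS lam) (ht : 0 < t) (n : ℕ) :
    Jp lam t (Polynomial.derivative (S.P (n+2) t) * S.P n t) 0
      = ((n+1) * (S.P (n+2) t).coeff (n+1) - (n+2) * (S.P (n+1) t).coeff n) * S.h n t := by
  set D := Polynomial.derivative (S.P (n+2) t) with hD
  set q' := D - Polynomial.C ((n:ℝ)+2) * S.P (n+1) t with hq'
  have hcoeff_top : (S.P (n+2) t).coeff (n+2) = 1 := by
    have := (S.monic (n+2) t ht).coeff_natDegree
    rwa [S.natDegree_eq (n+2) t ht] at this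
  have hq'deg : q'.degree < ((n+1:ℕ) : ℕ) := by
    rw [Polynomial.degree_lt_iff_coeff_zero]
    intro m hm
    rcases eq_or_lt_of_le hm with h | h
    · rw [hq', Polynomial.coeff_sub, Polynomial.coeff_C_mul, ← h, hD,
        Polynomial.coeff_derivative, hcoeff_top]
      have : (S.P (n+1) t).coeff (n+1) = 1 := by
        have := (S.monic (n+1) t ht).coeff_natDegree
        rwa [S.natDegree_eq (n+1) t ht] at this
      rw [this]
      push_cast
      ring
    · have h1 : D.coeff m = 0 := by
        rw [hD, Polynomial.coeff_derivative]
        have : (S.P (n+2) t).coeff (m+1) = 0 := by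
          apply Polynomial.coeff_eq_zero_of_natDegree_lt
          rw [S.natDegree_eq (n+2) t ht]; omega
        rw [this, zero_mul]
      have h2 : (S.P (n+1) t).coeff m = 0 := by
        apply Polynomial.coeff_eq_zero_of_natDegree_lt
        rw [S.natDegree_eq (n+1) t ht]; omega
      rw [hq', Polynomial.coeff_sub, Polynomial.coeff_C_mul, h1, h2, mul_zero, sub_self]
  have hsplit : D * S.P n t
      = q' * S.P n t + Polynomial.C ((n:ℝ)+2) * (S.P (n+1) t * S.P n t) := by
    rw [hq']; ring
  rw [hsplit, jp_add S ht, jp_Cmul, jp_orth S ht, if_neg (by omega), mul_zero, add_zero]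
  have hq'deg2 : q'.degree < ((n + 1 : ℕ) : ℕ) := hq'deg
  rw [jp_coeff S ht hq'deg2]
  congr 1
  rw [hq', Polynomial.coeff_sub, Polynomial.coeff_C_mul, hD, Polynomial.coeff_derivative]
  push_cast
  ring

theorem transfer (S : SingLaguerreOPS lam) (ht : 0 < t) (m n : ℕ) (a : ℤ) :
    Jp lam t (S.P m t * S.P n t) a
      = Jp lam t (S.P m t * S.P (n+1) t) (a-1)
        + S.α n t * Jp lam t (S.P m t * S.P n t) (a-1)
        + S.β n t * Jp lam t (S.P m t * Pi S t n) (a-1) := by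
  have hX : Jp lam t (Polynomial.X * (S.P m t * S.P n t)) (a-1)
      = Jp lam t (S.P m t * S.P n t) a := by
    rw [jp_Xmul]; congr 1; ring
  have hdecomp : Polynomial.X * (S.P m t * S.P n t)
      = S.P m t * S.P (n+1) t + Polynomial.C (S.α n t) * (S.P m t * S.P n t)
        + Polynomial.C (S.β n t) * (S.P m t * Pi S t n) := by
    have := recurJ S ht n
    calc Polynomial.X * (S.P m t * S.P n t) = (Polynomial.X * S.P n t) * S.P m t := by ring
      _ = _ := by rw [this]; ring
  rw [← hX, hdecomp, jp_add S ht, jp_add S ht, jp_Cmul, jp_Cmul]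

theorem rn_eq (S : SingLaguerreOPS lam) (ht : 0 < t) (n : ℕ) :
    rn lam S (n+1) t = t / S.h n t * Jp lam t (S.P (n+1) t * S.P n t) (-1) := by
  unfold rn
  rw [Nat.add_sub_cancel]
  congr 1
  refine setIntegral_congr_fun measurableSet_Ioi (fun x hx => ?_)
  have hx0 : (x:ℝ) ≠ 0 := ne_of_gt hx
  rw [if_neg (Nat.succ_ne_zero n), Polynomial.eval_mul, zpow_neg_one, div_eq_mul_inv]

theorem rn_zero (S : SingLaguerreOPS lam) : rn lam S 0 t = 0 := by
  unfold rn
  simp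

theorem Rn_eq (S : SingLaguerreOPS lam) (ht : 0 < t) (n : ℕ) :
    Rn lam S n t = t / S.h n t * Jp lam t (S.P n t * S.P n t) (-1) := by
  unfold Rn
  congr 1
  refine setIntegral_congr_fun measurableSet_Ioi (fun x hx => ?_)
  have hx0 : (x:ℝ) ≠ 0 := ne_of_gt hx
  rw [Polynomial.eval_mul, zpow_neg_one, div_eq_mul_inv, sq]

theorem coeff_rec1 (S : SingLaguerreOPS lam) (ht : 0 < t) :
    (S.P 1 t).coeff 0 = - S.α 0 t := by
  have h := S.recur 0 t ht
  norm_num [S.P_zero t ht] at h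
  have hc := congrArg (fun p => Polynomial.coeff p 0) h
  simp only [Polynomial.coeff_X_zero, Polynomial.coeff_add, Polynomial.coeff_C_zero] at hc
  linarith

theorem coeff_rec (S : SingLaguerreOPS lam) (ht : 0 < t) (n : ℕ) :
    (S.P (n+2) t).coeff (n+1) = (S.P (n+1) t).coeff n - S.α (n+1) t := by
  have h := recurJ S ht (n+1)
  have hPi : Pi S t (n+1) = S.P n t := by unfold Pi; simp
  rw [hPi] at h
  have hc := congrArg (fun p => Polynomial.coeff p (n+1)) h
  simp only [Polynomial.coeff_add, Polynomial.coeff_C_mul, Polynomial.coeff_X_mul] at hc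
  have h1 : (S.P (n+1) t).coeff (n+1) = 1 := by
    have := (S.monic (n+1) t ht).coeff_natDegree
    rwa [S.natDegree_eq (n+1) t ht] at this
  have h2 : (S.P n t).coeff (n+1) = 0 := by
    apply Polynomial.coeff_eq_zero_of_natDegree_lt
    rw [S.natDegree_eq n t ht]; omega
  rw [h1, h2, mul_one, mul_zero, add_zero] at hc
  linarith

theorem rel_s1 (S : SingLaguerreOPS lam) (ht : 0 < t) (n : ℕ) :
    rn lam S (n+1) t + S.α n t * Rn lam S n t + rn lam S n t = t := by
  have h0 : S.h n t ≠ 0 := ne_of_gt (S.h_pos n t ht)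
  rw [rn_eq S ht n, Rn_eq S ht n]
  cases n with
  | zero =>
      have htr := transfer S ht 0 0 0
      norm_num at htr
      rw [jp_orth S ht 0 0, if_pos rfl] at htr
      rw [jp_comm (S.P 0 t) (S.P 1 t)] at htr
      have hPi0 : Pi S t 0 = (0 : Polynomial ℝ) := if_pos rfl
      rw [hPi0, mul_zero, jp_zero, mul_zero, add_zero] at htr
      rw [rn_zero, add_zero]
      field_simp
      linear_combination (-1) * htr
  | succ k =>
      have htr := transfer S ht (k+1) (k+1) 0
      norm_num at htr
      rw [jp_orth S ht (k+1) (k+1), if_pos rfl] at htr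
      rw [jp_comm (S.P (k+1) t) (S.P (k+1+1) t)] at htr
      have hPik : Pi S t (k+1) = S.P k t := by unfold Pi; simp
      rw [hPik] at htr
      rw [rn_eq S ht k]
      have hk0 : S.h k t ≠ 0 := ne_of_gt (S.h_pos k t ht)
      have hh := h_succ S ht k
      have hb : S.β (k+1) t ≠ 0 := ne_of_gt (beta_pos S ht k)
      field_simp
      linear_combination (-S.h k t) * htr + (Jp lam t (S.P (k+1) t * S.P k t) (-1)) * hh
theorem ibp_self (S : SingLaguerreOPS lam) (hlam : 0 ≤ lam) (ht : 0 < t) (n : ℕ) :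
    t * Jp lam t (S.P n t * S.P n t) (-2)
      = 2 * S.α n t * S.h n t - lam * Jp lam t (S.P n t * S.P n t) (-1) := by
  have hibp := ibp S hlam ht (S.P n t * S.P n t)
  have hder : Jp lam t (Polynomial.derivative (S.P n t * S.P n t)) 0 = 0 := by
    rw [Polynomial.derivative_mul, jp_add S ht, jp_deriv_lt S ht (le_refl n),
      jp_comm, jp_deriv_lt S ht (le_refl n), add_zero]
  have hX : Jp lam t (Polynomial.X * (S.P n t * S.P n t)) 0 = S.α n t * S.h n t := by
    have hdecomp : Polynomial.X * (S.P n t * S.P n t)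
        = S.P n t * S.P (n+1) t + Polynomial.C (S.α n t) * (S.P n t * S.P n t)
          + Polynomial.C (S.β n t) * (S.P n t * Pi S t n) := by
      calc Polynomial.X * (S.P n t * S.P n t) = (Polynomial.X * S.P n t) * S.P n t := by ring
        _ = _ := by rw [recurJ S ht n]; ring
    rw [hdecomp, jp_add S ht, jp_add S ht, jp_Cmul, jp_Cmul, jp_orth S ht,
      if_neg (by omega), jp_orth S ht, if_pos rfl, jp_mul_Pi_self S ht n n (by omega)]
    ring
  rw [hder, hX] at hibp
  linarith

theorem ibp_succ (S : SingLaguerreOPS lam) (hlam : 0 ≤ lam) (ht : 0 < t) (n : ℕ) :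
    t * Jp lam t (S.P (n+1) t * S.P n t) (-2)
      = 2 * S.h (n+1) t - (n+1) * S.h n t - lam * Jp lam t (S.P (n+1) t * S.P n t) (-1) := by
  have hibp := ibp S hlam ht (S.P (n+1) t * S.P n t)
  have hder : Jp lam t (Polynomial.derivative (S.P (n+1) t * S.P n t)) 0
      = (n+1) * S.h n t := by
    rw [Polynomial.derivative_mul, jp_add S ht, jp_deriv_succ S ht n,
      jp_comm, jp_deriv_lt S ht (by omega : n ≤ n+1), add_zero]
  have hX : Jp lam t (Polynomial.X * (S.P (n+1) t * S.P n t)) 0 = S.h (n+1) t := by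
    have hdecomp : Polynomial.X * (S.P (n+1) t * S.P n t)
        = S.P (n+1) t * S.P (n+1) t + Polynomial.C (S.α n t) * (S.P (n+1) t * S.P n t)
          + Polynomial.C (S.β n t) * (S.P (n+1) t * Pi S t n) := by
      calc Polynomial.X * (S.P (n+1) t * S.P n t)
          = (Polynomial.X * S.P n t) * S.P (n+1) t := by ring
        _ = _ := by rw [recurJ S ht n]; ring
    rw [hdecomp, jp_add S ht, jp_add S ht, jp_Cmul, jp_Cmul, jp_orth S ht, if_pos rfl,
      jp_orth S ht, if_neg (by omega), jp_mul_Pi_self S ht n (n+1) (by omega)]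
    ring
  rw [hder, hX] at hibp
  linarith

theorem ibp_skip (S : SingLaguerreOPS lam) (hlam : 0 ≤ lam) (ht : 0 < t) (n : ℕ) :
    t * Jp lam t (S.P (n+2) t * S.P n t) (-2)
      = -((n+1) * (S.P (n+2) t).coeff (n+1) - (n+2) * (S.P (n+1) t).coeff n) * S.h n t
        - lam * Jp lam t (S.P (n+2) t * S.P n t) (-1) := by
  have hibp := ibp S hlam ht (S.P (n+2) t * S.P n t)
  have hder : Jp lam t (Polynomial.derivative (S.P (n+2) t * S.P n t)) 0
      = ((n+1) * (S.P (n+2) t).coeff (n+1) - (n+2) * (S.P (n+1) t).coeff n) * S.h n t := by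
    rw [Polynomial.derivative_mul, jp_add S ht, jp_deriv_skip S ht n,
      jp_comm, jp_deriv_lt S ht (by omega : n ≤ n+2), add_zero]
  have hX : Jp lam t (Polynomial.X * (S.P (n+2) t * S.P n t)) 0 = 0 := by
    have hdecomp : Polynomial.X * (S.P (n+2) t * S.P n t)
        = S.P (n+2) t * S.P (n+1) t + Polynomial.C (S.α n t) * (S.P (n+2) t * S.P n t)
          + Polynomial.C (S.β n t) * (S.P (n+2) t * Pi S t n) := by
      calc Polynomial.X * (S.P (n+2) t * S.P n t)
          = (Polynomial.X * S.P n t) * S.P (n+2) t := by ring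
        _ = _ := by rw [recurJ S ht n]; ring
    rw [hdecomp, jp_add S ht, jp_add S ht, jp_Cmul, jp_Cmul, jp_orth S ht, if_neg (by omega),
      jp_orth S ht, if_neg (by omega), jp_mul_Pi_self S ht n (n+2) (by omega)]
    ring
  rw [hder, hX] at hibp
  linarith
theorem rel_E2zero (S : SingLaguerreOPS lam) (hlam : 0 ≤ lam) (ht : 0 < t) :
    Rn lam S 0 t = 2 * S.β 1 t + 2 * (S.α 0 t)^2 - lam - 1 := by
  have hPi0 : Pi S t 0 = (0 : Polynomial ℝ) := if_pos rfl
  have htr := transfer S ht 0 0 (-1)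
  norm_num at htr
  rw [hPi0, mul_zero, jp_zero, mul_zero, add_zero] at htr
  have hbr := transfer S ht 0 0 0
  norm_num at hbr
  rw [hPi0, mul_zero, jp_zero, mul_zero, add_zero, jp_orth S ht 0 0, if_pos rfl] at hbr
  have hs := ibp_self S hlam ht 0
  have hsc := ibp_succ S hlam ht 0
  norm_num at hsc
  rw [jp_comm (S.P 1 t) (S.P 0 t)] at hsc
  rw [jp_comm (S.P 1 t) (S.P 0 t)] at hsc
  have key : t * Jp lam t (S.P 0 t * S.P 0 t) (-1)
      = 2 * S.h 1 t - S.h 0 t + 2 * (S.α 0 t)^2 * S.h 0 t - lam * S.h 0 t := by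
    linear_combination (norm := (push_cast; ring1)) t * htr + hsc + S.α 0 t * hs + lam * hbr
  have hh := h_succ S ht 0
  have h0 : S.h 0 t ≠ 0 := ne_of_gt (S.h_pos 0 t ht)
  rw [Rn_eq S ht 0]
  field_simp
  linear_combination (norm := (push_cast; ring1)) key + 2 * hh

theorem rel_E2succ (S : SingLaguerreOPS lam) (hlam : 0 ≤ lam) (ht : 0 < t) (m : ℕ) :
    Rn lam S (m+1) t = 2 * S.β (m+2) t + 2 * S.β (m+1) t + 2 * (S.α (m+1) t)^2
      - lam - 2*((m:ℝ)+1) - 1 := by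
  have hPik : Pi S t (m+1) = S.P m t := by unfold Pi; simp
  have htr := transfer S ht (m+1) (m+1) (-1)
  norm_num at htr
  rw [hPik] at htr
  have hbr := transfer S ht (m+1) (m+1) 0
  norm_num at hbr
  rw [hPik, jp_orth S ht (m+1) (m+1), if_pos rfl] at hbr
  have hs := ibp_self S hlam ht (m+1)
  have hsc1 := ibp_succ S hlam ht (m+1)
  rw [jp_comm (S.P (m+1+1) t) (S.P (m+1) t)] at hsc1
  rw [jp_comm (S.P (m+1+1) t) (S.P (m+1) t)] at hsc1
  have hsc0 := ibp_succ S hlam ht m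
  rw [jp_comm (S.P (m+1) t) (S.P m t)] at hsc0
  rw [jp_comm (S.P m t) (S.P (m+1) t)] at hsc0
  have hh1 := h_succ S ht m
  have hh2 := h_succ S ht (m+1)
  have h0 : S.h (m+1) t ≠ 0 := ne_of_gt (S.h_pos (m+1) t ht)
  have key : t * Jp lam t (S.P (m+1) t * S.P (m+1) t) (-1)
      = 2 * S.h (m+2) t - ((m:ℝ)+2) * S.h (m+1) t + 2 * (S.α (m+1) t)^2 * S.h (m+1) t
        + 2 * S.β (m+1) t * S.h (m+1) t - ((m:ℝ)+1) * S.h (m+1) t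
        - lam * S.h (m+1) t := by
    linear_combination (norm := (push_cast; ring1)) t * htr + hsc1 + S.α (m+1) t * hs
      + S.β (m+1) t * hsc0 + lam * hbr + ((m:ℝ)+1) * hh1
  rw [Rn_eq S ht (m+1)]
  field_simp
  linear_combination (norm := (push_cast; ring1)) key + 2 * hh2
theorem rel_SR (S : SingLaguerreOPS lam) (hlam : 0 ≤ lam) (ht : 0 < t) (m : ℕ) :
    rn lam S (m+1) t
      = 2 * S.β (m+1) t * (S.α (m+1) t + S.α m t) + (S.P (m+1) t).coeff m := by
  have htr := transfer S ht (m+1) m (-1)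
  norm_num at htr
  have hbr := transfer S ht (m+1) m 0
  norm_num at hbr
  rw [jp_orth S ht (m+1) m, if_neg (by omega)] at hbr
  have hs := ibp_self S hlam ht (m+1)
  rw [jp_comm (S.P (m+1) t) (S.P (m+1) t)] at hs
  have hsc0 := ibp_succ S hlam ht m
  have hh := h_succ S ht m
  have hm0 : S.h m t ≠ 0 := ne_of_gt (S.h_pos m t ht)
  rw [rn_eq S ht m]
  cases m with
  | zero =>
      have hPi0 : Pi S t 0 = (0 : Polynomial ℝ) := if_pos rfl
      rw [hPi0, mul_zero, jp_zero, mul_zero, add_zero] at htr hbr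
      rw [coeff_rec1 S ht]
      have key : t * Jp lam t (S.P 1 t * S.P 0 t) (-1)
          = 2 * S.α 1 t * S.h 1 t + S.α 0 t * (2 * S.h 1 t - S.h 0 t) := by
        linear_combination (norm := (push_cast; ring1))
          t * htr + hs + S.α 0 t * hsc0 + lam * hbr
      field_simp
      linear_combination (norm := (push_cast; ring1))
        key + (2 * S.α 1 t + 2 * S.α 0 t) * hh
  | succ k =>
      have hPik : Pi S t (k+1) = S.P k t := by unfold Pi; simp
      rw [hPik] at htr hbr
      have hskip := ibp_skip S hlam ht k
      have hcr := coeff_rec S ht k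
      have hh0 := h_succ S ht k
      have hk0 : S.h k t ≠ 0 := ne_of_gt (S.h_pos k t ht)
      have key : t * Jp lam t (S.P (k+2) t * S.P (k+1) t) (-1)
          = 2 * S.α (k+2) t * S.h (k+2) t
            + S.α (k+1) t * (2 * S.h (k+2) t - ((k:ℝ)+2) * S.h (k+1) t)
            - S.β (k+1) t * (((k:ℝ)+1) * (S.P (k+2) t).coeff (k+1)
                - ((k:ℝ)+2) * (S.P (k+1) t).coeff k) * S.h k t := by
        linear_combination (norm := (push_cast; ring1))
          t * htr + hs + S.α (k+1) t * hsc0 + S.β (k+1) t * hskip + lam * hbr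
      rw [div_mul_eq_mul_div, div_eq_iff hm0]
      linear_combination (norm := (push_cast; ring1))
        key + (2 * S.α (k+2) t + 2 * S.α (k+1) t) * hh
        + (((k:ℝ)+1) * (S.P (k+2) t).coeff (k+1) - ((k:ℝ)+2) * (S.P (k+1) t).coeff k) * hh0
        + (-(((k:ℝ)+2) * S.h (k+1) t)) * hcr
theorem P_split (S : SingLaguerreOPS lam) (n : ℕ) :
    S.P n t = Polynomial.C ((S.P n t).eval 0) + Polynomial.X * (S.P n t /ₘ Polynomial.X) := by
  have := Polynomial.modByMonic_add_div (S.P n t) (Polynomial.X)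
  rw [Polynomial.modByMonic_X] at this
  linear_combination (norm := ring_nf) -this

theorem q_coeff (S : SingLaguerreOPS lam) (n j : ℕ) :
    (S.P n t /ₘ Polynomial.X).coeff j = (S.P n t).coeff (j+1) := by
  have h := congrArg (fun p => Polynomial.coeff p (j+1)) (P_split (t := t) S n)
  simp only [Polynomial.coeff_add, Polynomial.coeff_X_mul, Polynomial.coeff_C,
    Nat.succ_ne_zero, if_false, zero_add, add_zero] at h
  linarith

theorem q_deg (S : SingLaguerreOPS lam) (ht : 0 < t) (n : ℕ) :
    (S.P n t /ₘ Polynomial.X).degree < (n : ℕ) := by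
  rw [Polynomial.degree_lt_iff_coeff_zero]
  intro j hj
  rw [q_coeff S n j]
  apply Polynomial.coeff_eq_zero_of_natDegree_lt
  rw [S.natDegree_eq n t ht]; omega

theorem fact1 (S : SingLaguerreOPS lam) (ht : 0 < t) (n : ℕ) :
    Jp lam t (S.P (n+1) t * S.P n t) (-1)
      = (S.P (n+1) t).eval 0 * Jp lam t (S.P n t) (-1) + S.h n t := by
  have hsplit : S.P (n+1) t * S.P n t
      = Polynomial.C ((S.P (n+1) t).eval 0) * S.P n t
        + Polynomial.X * ((S.P (n+1) t /ₘ Polynomial.X) * S.P n t) := by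
    calc S.P (n+1) t * S.P n t
        = (Polynomial.C ((S.P (n+1) t).eval 0)
            + Polynomial.X * (S.P (n+1) t /ₘ Polynomial.X)) * S.P n t := by
          rw [← P_split S (n+1)]
      _ = _ := by ring
  rw [hsplit, jp_add S ht, jp_Cmul, jp_Xmul]
  norm_num
  have hdeg : ((S.P (n+1) t /ₘ Polynomial.X)).degree < ((n+1:ℕ):ℕ) := q_deg S ht (n+1)
  rw [jp_coeff S ht hdeg, q_coeff S (n+1) n]
  have : (S.P (n+1) t).coeff (n+1) = 1 := by
    have := (S.monic (n+1) t ht).coeff_natDegree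
    rwa [S.natDegree_eq (n+1) t ht] at this
  rw [this, one_mul]

theorem fact2 (S : SingLaguerreOPS lam) (ht : 0 < t) (n : ℕ) :
    Jp lam t (S.P (n+1) t * S.P n t) (-1)
      = (S.P n t).eval 0 * Jp lam t (S.P (n+1) t) (-1) := by
  have hsplit : S.P (n+1) t * S.P n t
      = Polynomial.C ((S.P n t).eval 0) * S.P (n+1) t
        + Polynomial.X * ((S.P n t /ₘ Polynomial.X) * S.P (n+1) t) := by
    calc S.P (n+1) t * S.P n t
        = (Polynomial.C ((S.P n t).eval 0)
            + Polynomial.X * (S.P n t /ₘ Polynomial.X)) * S.P (n+1) t := by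
          rw [← P_split S n]; ring
      _ = _ := by ring
  rw [hsplit, jp_add S ht, jp_Cmul, jp_Xmul]
  norm_num
  have hdeg : ((S.P n t /ₘ Polynomial.X)).degree < ((n+1:ℕ):ℕ) := by
    refine lt_trans (q_deg S ht n) ?_
    exact_mod_cast Nat.lt_succ_self n
  rw [jp_lt S ht hdeg]

theorem fact3 (S : SingLaguerreOPS lam) (ht : 0 < t) (n : ℕ) :
    Jp lam t (S.P n t * S.P n t) (-1)
      = (S.P n t).eval 0 * Jp lam t (S.P n t) (-1) := by
  have hsplit : S.P n t * S.P n t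
      = Polynomial.C ((S.P n t).eval 0) * S.P n t
        + Polynomial.X * ((S.P n t /ₘ Polynomial.X) * S.P n t) := by
    calc S.P n t * S.P n t
        = (Polynomial.C ((S.P n t).eval 0)
            + Polynomial.X * (S.P n t /ₘ Polynomial.X)) * S.P n t := by
          rw [← P_split S n]
      _ = _ := by ring
  rw [hsplit, jp_add S ht, jp_Cmul, jp_Xmul]
  norm_num
  rw [jp_lt S ht (q_deg S ht n)]
theorem rel_star (S : SingLaguerreOPS lam) (ht : 0 < t) (m : ℕ) :
    rn lam S (m+1) t * (rn lam S (m+1) t - t)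
      = S.β (m+1) t * Rn lam S (m+1) t * Rn lam S m t := by
  have f1 := fact1 S ht m
  have f2 := fact2 S ht m
  have f3a := fact3 S ht (m+1)
  have f3b := fact3 S ht m
  have hh := h_succ S ht m
  have h0 : S.h m t ≠ 0 := ne_of_gt (S.h_pos m t ht)
  have h1 : S.h (m+1) t ≠ 0 := ne_of_gt (S.h_pos (m+1) t ht)
  rw [rn_eq S ht m, Rn_eq S ht (m+1), Rn_eq S ht m]
  set J := Jp lam t (S.P (m+1) t * S.P m t) (-1)
  set J1 := Jp lam t (S.P (m+1) t * S.P (m+1) t) (-1)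
  set J0 := Jp lam t (S.P m t * S.P m t) (-1)
  set A := (S.P (m+1) t).eval 0
  set B := (S.P m t).eval 0
  set G1 := Jp lam t (S.P (m+1) t) (-1)
  set G0 := Jp lam t (S.P m t) (-1)
  field_simp
  linear_combination
    (S.h (m+1) t * (J - S.h m t)) * f2
    + (S.h (m+1) t * B * G1) * f1
    + (-(S.h m t * S.β (m+1) t * J0)) * f3a
    + (-(S.h m t * S.β (m+1) t * A * G1)) * f3b
    + (A * B * G0 * G1) * hh
theorem Rn_pos (S : SingLaguerreOPS lam) (hlam : 0 ≤ lam) (ht : 0 < t) (n : ℕ) :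
    0 < Rn lam S n t := by
  rw [Rn_eq S ht n]
  exact mul_pos (div_pos ht (S.h_pos n t ht)) (jp_sq_neg_one_pos S hlam ht n)

end SLaux

theorem statement8 (lam t : ℝ) (hlam : 0 ≤ lam) (ht : 0 < t)
    (S : SingLaguerreOPS lam) (n : ℕ) (hn : 1 ≤ n) :
    (4 * S.β n t - 2 * n - lam) * rn lam S n t + n * t
      = 2 * S.β n t * (t + S.α n t * Rn lam S (n-1) t + S.α (n-1) t * Rn lam S n t) := by
  open SLaux in
  obtain ⟨m, rfl⟩ : ∃ m, n = m + 1 := ⟨n - 1, by omega⟩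
  clear hn
  induction m with
  | zero =>
      simp only [zero_add, Nat.add_sub_cancel]
      have hSR := rel_SR S hlam ht 0
      rw [coeff_rec1 S ht] at hSR
      have hE2 := rel_E2zero S hlam ht
      have hs1 := rel_s1 S ht 0
      rw [rn_zero S, add_zero] at hs1
      have hstar := rel_star S ht 0
      have hR0 : Rn lam S 0 t ≠ 0 := ne_of_gt (Rn_pos S hlam ht 0)
      have key : Rn lam S 0 t * ((4 * S.β 1 t - 2 * (1:ℕ) - lam) * rn lam S 1 t + (1:ℕ) * t)
          = Rn lam S 0 t
            * (2 * S.β 1 t * (t + S.α 1 t * Rn lam S 0 t + S.α 0 t * Rn lam S 1 t)) := by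
        linear_combination (norm := (push_cast; ring1))
          (2 * S.α 0 t) * hstar
          + ((2 * S.β 1 t - 1) * Rn lam S 0 t - 2 * S.α 0 t * rn lam S 1 t) * hs1
          + ((2 * S.β 1 t + 2 * (S.α 0 t)^2 - 1 - lam) * Rn lam S 0 t) * hSR
          + ((S.α 0 t - 2 * S.α 1 t * S.β 1 t - 2 * S.α 0 t * S.β 1 t) * Rn lam S 0 t) * hE2
      have := mul_left_cancel₀ hR0 key
      push_cast at this ⊢
      linarith
  | succ k ih =>
      have ih' := ih
      simp only [Nat.add_sub_cancel] at ih' ⊢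
      have h1 := rel_SR S hlam ht k
      have h2 := rel_SR S hlam ht (k+1)
      rw [coeff_rec S ht k] at h2
      have h3 := rel_E2succ S hlam ht k
      have h4 := rel_s1 S ht (k+1)
      have h5 := rel_star S ht k
      have h6 := rel_star S ht (k+1)
      have hR : Rn lam S (k+1) t ≠ 0 := ne_of_gt (Rn_pos S hlam ht (k+1))
      have hb2 : S.β (k+2) t ≠ 0 := ne_of_gt (beta_pos S ht (k+1))
      set a0 := S.α k t
      set a1 := S.α (k+1) t
      set a2 := S.α (k+2) t
      set b1 := S.β (k+1) t
      set b2 := S.β (k+2) t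
      set Rm := Rn lam S k t
      set Rc := Rn lam S (k+1) t
      set Rp := Rn lam S (k+2) t
      set rc := rn lam S (k+1) t
      set rp := rn lam S (k+2) t
      have key : (b2 * Rc) * ((4 * b2 - 2 * ((k:ℝ)+2) - lam) * rp + ((k:ℝ)+2) * t)
          = (b2 * Rc) * (2 * b2 * (t + a2 * Rc + a1 * Rp)) := by
        linear_combination (norm := (push_cast; ring1))
          (b2 * Rc * (1 + 2*((k:ℝ)+1) + lam - 2*b2 - 2*b1 - 2*a1^2)) * h1
          + (-(b2 * Rc * (1 + 2*((k:ℝ)+1) + lam - 2*b2 - 2*b1 - 2*a1^2))) * h2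
          + (b2 * Rc * (-2*a2*b2 + a1 - 2*a1*b2 + 2*a1*b1 + 2*a0*b1)) * h3
          + (b2 * Rc * (-1 + 2*b2 - 2*b1) + 2*a1*b2*(rc - rp)) * h4
          + (-(2*a1*b2)) * h5
          + (2*a1*b2) * h6
          + (b2 * Rc) * ih'
      have := mul_left_cancel₀ (mul_ne_zero hb2 hR) key
      push_cast at this ⊢
      linarith
end
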